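/- arXiv:2401.05518 — 6 statements merged into one kernel-verified Lean document; each statement's English description precedes it below -/
import Mathlib

section
/- Under the correlated quantization construction, for i ≠ j: E[𝟙{πᵢ/n + γᵢ < a} · 𝟙{πᵢ > πⱼ}] = (1/(2n(n-1)))·(n²a² - na + c_a), where c_a = (na - ⌊na⌋)(⌊na⌋ + 1 - na). -/
/-!
Conditioning on the permutation splits the event into the pieces `{π = σ} ∩ {γᵢ < a - σᵢ/n}`
with `σⱼ < σᵢ`; by independence each has probability `(1/n!) · clamp(na - σᵢ)`, where `clamp`
is the distribution function of `Uniform[0,1]`. Since `(σ i, σ j)` is uniform on the pairs of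
distinct values, the sum collapses to `(1/(n(n-1))) ∑ₖ k · clamp(na - k)`. With `m = ⌊na⌋` only
the terms `k ≤ m` survive, giving `m(m-1)/2 + m(na - m)`.
-/

open MeasureTheory Finset ENNReal

namespace Equiv.Perm

variable {α : Type*} [DecidableEq α]

theorem exists_apply_eq_apply_eq {k l k' l' : α} (hkl : k ≠ l) (hkl' : k' ≠ l') :
    ∃ ρ : Perm α, ρ k = k' ∧ ρ l = l' := by
  refine ⟨swap (swap k k' l) l' * swap k k', ?_, by simp⟩
  have : k' ≠ swap k k' l := fun h => hkl ((swap k k').injective (by simp [← h]))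
  simp [swap_apply_of_ne_of_ne this hkl']

variable [Fintype α]

theorem card_apply_eq_apply_eq_congr (i j : α) {k l k' l' : α} (hkl : k ≠ l) (hkl' : k' ≠ l') :
    #{σ : Perm α | σ i = k ∧ σ j = l} = #{σ : Perm α | σ i = k' ∧ σ j = l'} := by
  obtain ⟨ρ, hρk, hρl⟩ := exists_apply_eq_apply_eq hkl hkl'
  refine card_bij' (fun σ _ => ρ * σ) (fun σ _ => ρ⁻¹ * σ) ?_ ?_ ?_ ?_ <;>
    simp +contextual [← hρk, ← hρl]

theorem card_fiber_apply_apply {i j : α} (hij : i ≠ j) {p : α × α} (hp : p ∈ univ.offDiag) :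
    #{σ : Perm α | (σ i, σ j) = p} = #{σ : Perm α | σ i = i ∧ σ j = j} := by
  simp only [Prod.ext_iff]
  exact card_apply_eq_apply_eq_congr i j (mem_offDiag.mp hp).2.2 hij

theorem card_mul_sum_apply_apply {i j : α} (hij : i ≠ j) {M : Type*} [AddCommMonoid M]
    (F : α → α → M) :
    (Fintype.card α * (Fintype.card α - 1)) • ∑ σ : Perm α, F (σ i) (σ j)
      = (Fintype.card α).factorial • ∑ p ∈ univ.offDiag, F p.1 p.2 := by
  set C := #{σ : Perm α | σ i = i ∧ σ j = j}
  have hmaps : ∀ σ ∈ (univ : Finset (Perm α)), (σ i, σ j) ∈ univ.offDiag := by simpa using hij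
  have hsum : ∑ σ : Perm α, F (σ i) (σ j) = C • ∑ p ∈ univ.offDiag, F p.1 p.2 := by
    rw [← sum_fiberwise_of_maps_to' hmaps fun p => F p.1 p.2, smul_sum]
    exact sum_congr rfl fun p hp => by rw [sum_const, card_fiber_apply_apply hij hp]
  have hcard : (Fintype.card α).factorial = (Fintype.card α * (Fintype.card α - 1)) * C := by
    rw [← Fintype.card_perm, ← card_univ, card_eq_sum_card_fiberwise hmaps,
      sum_congr rfl fun p hp => card_fiber_apply_apply hij hp, sum_const, offDiag_card,
      card_univ, Nat.mul_sub_one, smul_eq_mul]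
  rw [hsum, hcard, smul_smul]

end Equiv.Perm

theorem Fin.sum_offDiag_ite_lt {n : ℕ} {M : Type*} [AddCommMonoid M] (g : Fin n → M) :
    ∑ p ∈ univ.offDiag, (if p.2 < p.1 then g p.1 else 0) = ∑ k : Fin n, (k : ℕ) • g k := by
  rw [sum_subset (subset_univ _) fun p _ hp => if_neg (by simp_all), Fintype.sum_prod_type]
  simp [sum_ite, filter_gt_eq_Iio]

theorem sum_range_mul_min_max {x : ℝ} (hx : 0 ≤ x) {n : ℕ} (hxn : x ≤ n) :
    ∑ k ∈ range n, (k : ℝ) * max (min (x - k) 1) 0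
      = ⌊x⌋₊ * (⌊x⌋₊ - 1 : ℝ) / 2 + ⌊x⌋₊ * (x - ⌊x⌋₊) := by
  set m := ⌊x⌋₊
  have hmx : (m : ℝ) ≤ x := Nat.floor_le hx
  have hxm : x < m + 1 := Nat.lt_floor_add_one x
  set f : ℕ → ℝ := fun k => k * max (min (x - k) 1) 0
  have hsupport : ∀ N ≤ n + m + 1, x ≤ N → ∑ k ∈ range N, f k = ∑ k ∈ range (n + m + 1), f k :=
    fun N hN hxN => sum_subset (by gcongr) fun k _ hk => by
      have : (N : ℝ) ≤ k := by simpa using hk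
      simp only [f]; rw [max_eq_right (by linarith [min_le_left (x - k) 1]), mul_zero]
  have hfull : ∀ k ∈ range m, f k = k := fun k hk => by
    have : (k : ℝ) + 1 ≤ m := by exact_mod_cast mem_range.mp hk
    simp only [f]; rw [min_eq_right (by linarith), max_eq_left zero_le_one, mul_one]
  have hgauss : ∀ N : ℕ, ∑ k ∈ range N, (k : ℝ) = N * (N - 1) / 2 := fun N => by
    induction N with
    | zero => simp
    | succ N ih => rw [sum_range_succ, ih]; push_cast; ring
  rw [hsupport n (by omega) hxn, ← hsupport (m + 1) (by omega) (by push_cast; linarith),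
    sum_range_succ, sum_congr rfl hfull, hgauss]
  simp only [f]
  rw [min_eq_left (by linarith), max_eq_left (by linarith)]

theorem measure_eq_sum_perm {Ω α : Type*} [MeasurableSpace Ω] [Fintype α] [DecidableEq α]
    [MeasurableSpace (α → α)] [MeasurableSingletonClass (α → α)] (μ : Measure Ω)
    {π : Ω → α → α} (hbij : ∀ ω, Function.Bijective (π ω)) (hπ : Measurable π)
    {E : Set Ω} (hE : MeasurableSet E) :
    μ E = ∑ σ : Equiv.Perm α, μ ({ω | π ω = σ} ∩ E) := by
  have hcover : E = ⋃ σ ∈ (univ : Finset (Equiv.Perm α)), {ω | π ω = σ} ∩ E := by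
    ext ω
    simpa using fun _ => ⟨Equiv.ofBijective _ (hbij ω), rfl⟩
  conv_lhs => rw [hcover]
  refine measure_biUnion_finset (fun σ _ τ _ hστ => ?_) fun σ _ =>
    (hπ (measurableSet_singleton _)).inter hE
  exact Set.disjoint_left.mpr fun ω h h' => hστ (DFunLike.coe_injective (h.1.symm.trans h'.1))

theorem measure_inter_coord_mem {Ω ι β : Type*} [MeasurableSpace Ω] [MeasurableSpace β]
    [Fintype ι] [DecidableEq ι] {μ : Measure Ω} [IsProbabilityMeasure μ] {A : Set Ω}
    {γ : Ω → ι → β}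
    (hindep : ∀ s : ι → Set β, (∀ i, MeasurableSet (s i)) →
      μ (A ∩ {ω | ∀ i, γ ω i ∈ s i}) = μ A * ∏ i, μ {ω | γ ω i ∈ s i})
    (i : ι) {t : Set β} (ht : MeasurableSet t) :
    μ (A ∩ {ω | γ ω i ∈ t}) = μ A * μ {ω | γ ω i ∈ t} := by
  set s : ι → Set β := Function.update (fun _ => Set.univ) i t
  have hs : ∀ i', MeasurableSet (s i') := fun i' => by
    rcases eq_or_ne i' i with rfl | h <;> simp [s, *]
  have hset : {ω | ∀ i', γ ω i' ∈ s i'} = {ω | γ ω i ∈ t} := by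
    ext ω; simp [s, Function.update_apply]
  have hprod : ∏ i', μ {ω | γ ω i' ∈ s i'} = μ {ω | γ ω i ∈ t} := by
    rw [prod_eq_single i (fun i' _ h => by simp [s, h]) (by simp)]
    simp [s]
  rw [← hset, hindep s hs, hprod, hset]

theorem smul_volume_restrict_Ico_Iio {n : ℕ} (hn : n ≠ 0) (c : ℝ) :
    ((n : ℝ≥0∞) • volume.restrict (Set.Ico (0 : ℝ) (1 / n))) (Set.Iio c)
      = ENNReal.ofReal (min (n * c) 1) := by
  have hn' : (0 : ℝ) < n := by positivity
  rw [Measure.smul_apply, Measure.restrict_apply measurableSet_Iio, Set.inter_comm,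
    Set.Ico_inter_Iio, Real.volume_Ico, smul_eq_mul, ← ofReal_natCast, ← ofReal_mul hn'.le, sub_zero,
    mul_min_of_nonneg _ _ hn'.le, mul_one_div_cancel hn'.ne', min_comm]

section CorrelatedQuantizer

variable {Ω : Type*} [MeasurableSpace Ω] {μ : Measure Ω} [IsProbabilityMeasure μ] {n : ℕ}
  {π : Ω → Fin n → Fin n} {γ : Ω → Fin n → ℝ}

theorem measure_perm_inter_cross_event (hγmeas : ∀ i, Measurable (fun ω => γ ω i))
    (hπ : ∀ σ : Equiv.Perm (Fin n), μ {ω | π ω = ⇑σ} = ((n.factorial : ENNReal))⁻¹)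
    (hγ : ∀ i, Measure.map (fun ω => γ ω i) μ
      = (n : ENNReal) • (volume.restrict (Set.Ico (0 : ℝ) (1 / n))))
    (hindep : ∀ (σ : Equiv.Perm (Fin n)) (s : Fin n → Set ℝ),
      (∀ i, MeasurableSet (s i)) →
      μ ({ω | π ω = ⇑σ} ∩ {ω | ∀ i, γ ω i ∈ s i})
        = μ {ω | π ω = ⇑σ} * ∏ i, μ {ω | γ ω i ∈ s i})
    (a : ℝ) (i j : Fin n) (σ : Equiv.Perm (Fin n)) :
    μ ({ω | π ω = σ} ∩ {ω | ((π ω i : ℕ) : ℝ) / n + γ ω i < a ∧ π ω j < π ω i})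
      = if σ j < σ i then (n.factorial : ℝ≥0∞)⁻¹ * ENNReal.ofReal (min (n * a - (σ i : ℕ)) 1)
        else 0 := by
  have hset : {ω | π ω = σ} ∩ {ω | ((π ω i : ℕ) : ℝ) / n + γ ω i < a ∧ π ω j < π ω i}
      = if σ j < σ i then {ω | π ω = σ} ∩ {ω | γ ω i ∈ Set.Iio (a - (σ i : ℕ) / n)} else ∅ := by
    split_ifs with h <;> ext ω <;> simp +contextual [h, lt_sub_iff_add_lt']
  have hn : n ≠ 0 := i.pos.ne'
  rw [hset]
  split_ifs
  · rw [measure_inter_coord_mem (hindep σ) i measurableSet_Iio, hπ σ]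
    change _ * μ ((fun ω => γ ω i) ⁻¹' _) = _
    rw [← Measure.map_apply (hγmeas i) measurableSet_Iio, hγ i,
      smul_volume_restrict_Ico_Iio hn, mul_sub, mul_div_cancel₀ _ (Nat.cast_ne_zero.mpr hn)]
  · exact measure_empty

theorem toReal_measure_cross_event (hbij : ∀ ω, Function.Bijective (π ω)) (hπmeas : Measurable π)
    (hγmeas : ∀ i, Measurable (fun ω => γ ω i))
    (hπ : ∀ σ : Equiv.Perm (Fin n), μ {ω | π ω = ⇑σ} = ((n.factorial : ENNReal))⁻¹)
    (hγ : ∀ i, Measure.map (fun ω => γ ω i) μ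
      = (n : ENNReal) • (volume.restrict (Set.Ico (0 : ℝ) (1 / n))))
    (hindep : ∀ (σ : Equiv.Perm (Fin n)) (s : Fin n → Set ℝ),
      (∀ i, MeasurableSet (s i)) →
      μ ({ω | π ω = ⇑σ} ∩ {ω | ∀ i, γ ω i ∈ s i})
        = μ {ω | π ω = ⇑σ} * ∏ i, μ {ω | γ ω i ∈ s i})
    (a : ℝ) (i j : Fin n) :
    (μ {ω | ((π ω i : ℕ) : ℝ) / n + γ ω i < a ∧ π ω j < π ω i}).toReal
      = (n.factorial : ℝ)⁻¹ * ∑ σ : Equiv.Perm (Fin n),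
          if σ j < σ i then max (min (n * a - (σ i : ℕ)) 1) 0 else 0 := by
  have hE : MeasurableSet {ω | ((π ω i : ℕ) : ℝ) / n + γ ω i < a ∧ π ω j < π ω i} := by
    measurability
  rw [measure_eq_sum_perm μ hbij hπmeas hE, toReal_sum (by finiteness), mul_sum]
  refine sum_congr rfl fun σ _ => ?_
  rw [measure_perm_inter_cross_event hγmeas hπ hγ hindep]
  split_ifs <;>
    simp only [toReal_mul, toReal_inv, toReal_natCast, toReal_ofReal', toReal_zero, mul_zero]

end CorrelatedQuantizer

theorem correlated_quantizer_cross_term_general (n : ℕ) (a : ℝ)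
    (ha : a ∈ Set.Icc (0 : ℝ) 1)
    {Ω : Type*} [MeasurableSpace Ω] (μ : Measure Ω) [IsProbabilityMeasure μ]
    (π : Ω → Fin n → Fin n) (hbij : ∀ ω, Function.Bijective (π ω))
    (γ : Ω → Fin n → ℝ)
    (hπmeas : Measurable π) (hγmeas : ∀ i, Measurable (fun ω => γ ω i))
    (hπ : ∀ σ : Equiv.Perm (Fin n), μ {ω | π ω = ⇑σ} = ((n.factorial : ENNReal))⁻¹)
    (hγ : ∀ i, Measure.map (fun ω => γ ω i) μ
      = (n : ENNReal) • (volume.restrict (Set.Ico (0 : ℝ) (1 / n))))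
    (hindep : ∀ (σ : Equiv.Perm (Fin n)) (s : Fin n → Set ℝ),
      (∀ i, MeasurableSet (s i)) →
      μ ({ω | π ω = ⇑σ} ∩ {ω | ∀ i, γ ω i ∈ s i})
        = μ {ω | π ω = ⇑σ} * ∏ i, μ {ω | γ ω i ∈ s i})
    (i j : Fin n) (hij : i ≠ j) :
    (μ {ω | ((π ω i : ℕ) : ℝ) / n + γ ω i < a ∧ π ω j < π ω i}).toReal
      = (1 / (2 * n * (n - 1 : ℝ)))
        * ((n : ℝ) ^ 2 * a ^ 2 - n * a
            + ((n : ℝ) * a - ⌊(n : ℝ) * a⌋) * ((⌊(n : ℝ) * a⌋ : ℝ) + 1 - (n : ℝ) * a)) := by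
  obtain ⟨ha0, ha1⟩ := ha
  have hn : 1 < n := Fintype.card_fin n ▸ Fintype.one_lt_card_iff.mpr ⟨i, j, hij⟩
  have hn' : (1 : ℝ) < n := by exact_mod_cast hn
  set g : Fin n → ℝ := fun k => max (min (n * a - (k : ℕ)) 1) 0
  have hperm := Equiv.Perm.card_mul_sum_apply_apply hij fun k l => if l < k then g k else 0
  rw [Fin.sum_offDiag_ite_lt, Fintype.card_fin] at hperm
  simp only [nsmul_eq_mul] at hperm
  rw [Fin.sum_univ_eq_sum_range (fun k => k * max (min (n * a - k) 1) 0),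
    sum_range_mul_min_max (by positivity) (by nlinarith),
    natCast_floor_eq_intCast_floor (by positivity), Nat.cast_mul, Nat.cast_sub hn.le,
    Nat.cast_one] at hperm
  rw [toReal_measure_cross_event hbij hπmeas hγmeas hπ hγ hindep]
  have hfac : (n.factorial : ℝ) ≠ 0 := by positivity
  have hn1 : (n : ℝ) - 1 ≠ 0 := by linarith
  field_simp
  linear_combination 2 * hperm

/-- in the correlated quantization construction, for `i ≠ j`,
`E[𝟙{π i/n + γ i < a} ⬝ 𝟙{π i > π j}] = (1/(2 n (n-1))) (n² a² - n a + c_a)`,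
where `c_a = (na - ⌊na⌋)(⌊na⌋ + 1 - na)`. -/
theorem correlated_quantizer_cross_term (n : ℕ) (hn : 2 ≤ n) (a : ℝ)
    (ha : a ∈ Set.Icc (0 : ℝ) 1)
    {Ω : Type*} [MeasurableSpace Ω] (μ : Measure Ω) [IsProbabilityMeasure μ]
    (π : Ω → Fin n → Fin n) (hbij : ∀ ω, Function.Bijective (π ω))
    (γ : Ω → Fin n → ℝ)
    (hπmeas : Measurable π) (hγmeas : ∀ i, Measurable (fun ω => γ ω i))
    (hπ : ∀ σ : Equiv.Perm (Fin n), μ {ω | π ω = ⇑σ} = ((n.factorial : ENNReal))⁻¹)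
    (hγ : ∀ i, Measure.map (fun ω => γ ω i) μ
      = (n : ENNReal) • (volume.restrict (Set.Ico (0 : ℝ) (1 / n))))
    (hindep : ∀ (σ : Equiv.Perm (Fin n)) (s : Fin n → Set ℝ),
      (∀ i, MeasurableSet (s i)) →
      μ ({ω | π ω = ⇑σ} ∩ {ω | ∀ i, γ ω i ∈ s i})
        = μ {ω | π ω = ⇑σ} * ∏ i, μ {ω | γ ω i ∈ s i})
    (i j : Fin n) (hij : i ≠ j) :
    (μ {ω | ((π ω i : ℕ) : ℝ) / n + γ ω i < a ∧ π ω j < π ω i}).toReal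
      = (1 / (2 * n * (n - 1 : ℝ)))
        * ((n : ℝ) ^ 2 * a ^ 2 - n * a
            + ((n : ℝ) * a - ⌊(n : ℝ) * a⌋) * ((⌊(n : ℝ) * a⌋ : ℝ) + 1 - (n : ℝ) * a)) :=
  correlated_quantizer_cross_term_general n a ha μ π hbij γ hπmeas hγmeas hπ hγ hindep i j hij
end

section
/- For the correlated quantizers Qᵢ(a) = 𝟙{πᵢ/n + γᵢ < a} with i ≠ j and a ∈ [0,1], E[Qᵢ(a)Qⱼ(a)] - a² = (1/(n(n-1)))·(-na(1-a) + c_a), where c_a = (na - ⌊na⌋)(⌊na⌋ + 1 - na). -/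
/-!
Given `π = σ`, the dithers of `i` and `j` are independent and uniform on `[0, 1/n)`, so `Q i(a)`
fires with probability `p (σ i)`, where `p k` is the fraction of the cell `[k/n, (k+1)/n)` lying
below `a`. For a uniform `σ` the pair `(σ i, σ j)` is uniform over ordered pairs of distinct
ranks, so `E[Q i Q j] = ((∑ p)² - ∑ p²) / (n (n-1))`. The cells `k < ⌊n a⌋` lie entirely below
`a` and the next one is cut at `fract (n a)`, whence `∑ p = n a` and
`∑ p² = ⌊n a⌋ + fract (n a)²`.
-/

open MeasureTheory ProbabilityTheory

open Finset Set

open scoped Nat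

lemma sum_range_comp_projIcc_sub {M : Type*} [AddCommMonoid M] (f : ℝ → M) (hf : f 0 = 0)
    (n : ℕ) {x : ℝ} (hx : 0 ≤ x) (hxn : x ≤ n) :
    ∑ k ∈ range n, f (projIcc 0 1 zero_le_one (x - k)) = ⌊x⌋₊ • f 1 + f (Int.fract x) := by
  induction n generalizing x with
  | zero =>
    obtain rfl : x = 0 := le_antisymm (by simpa using hxn) hx
    simp [hf]
  | succ n ih =>
    rw [sum_range_succ']
    rcases lt_or_ge x 1 with hx1 | hx1
    · have hvanish : ∀ k ∈ range n, f (projIcc 0 1 zero_le_one (x - (k + 1 : ℕ))) = 0 := by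
        intro k _
        rw [projIcc_of_le_left _ (by push_cast; linarith [(k.cast_nonneg : (0 : ℝ) ≤ k)])]
        exact hf
      rw [sum_eq_zero hvanish, Nat.floor_eq_zero.2 hx1, Int.fract_eq_self.2 ⟨hx, hx1⟩,
        projIcc_of_mem _ ⟨by simpa using hx, by simpa using hx1.le⟩]
      simp
    · have hshift := ih (x := x - 1) (by linarith) (by push_cast at hxn; linarith)
      simp only [Nat.cast_add, Nat.cast_one, sub_add_eq_sub_sub_swap] at hshift ⊢
      rw [hshift, Nat.floor_sub_one, Int.fract_sub_one, Nat.cast_zero, sub_zero,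
        projIcc_of_right_le _ hx1]
      obtain ⟨m, hm⟩ : ∃ m, ⌊x⌋₊ = m + 1 :=
        Nat.exists_eq_add_of_le' ((Nat.one_le_floor_iff _).2 hx1)
      rw [hm, Nat.add_sub_cancel, succ_nsmul]
      abel

/-- The fraction of the cell `[k/n, (k+1)/n)` that lies below `a`. -/
noncomputable def cellFraction (n : ℕ) (a : ℝ) (k : ℕ) : ℝ :=
  projIcc 0 1 zero_le_one (n * a - k)

lemma cellFraction_nonneg (n : ℕ) (a : ℝ) (k : ℕ) : 0 ≤ cellFraction n a k :=
  (projIcc 0 1 zero_le_one _).2.1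

lemma sum_cellFraction {n : ℕ} {a : ℝ} (ha : a ∈ Icc (0 : ℝ) 1) :
    ∑ k ∈ range n, cellFraction n a k = n * a := by
  have hna : 0 ≤ (n : ℝ) * a := by nlinarith [ha.1]
  have h := sum_range_comp_projIcc_sub id rfl n hna (by nlinarith [ha.2, n.cast_nonneg (α := ℝ)])
  simpa [cellFraction, natCast_floor_eq_intCast_floor hna, Int.floor_add_fract] using h

lemma sum_cellFraction_sq {n : ℕ} {a : ℝ} (ha : a ∈ Icc (0 : ℝ) 1) :
    ∑ k ∈ range n, cellFraction n a k ^ 2 = ⌊(n : ℝ) * a⌋ + ((n : ℝ) * a - ⌊(n : ℝ) * a⌋) ^ 2 := by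
  have hna : 0 ≤ (n : ℝ) * a := by nlinarith [ha.1]
  have h := sum_range_comp_projIcc_sub (· ^ 2) (zero_pow two_ne_zero) n hna
    (by nlinarith [ha.2, n.cast_nonneg (α := ℝ)])
  simpa [cellFraction, natCast_floor_eq_intCast_floor hna, ← Int.self_sub_floor] using h

section PermSum

variable {α : Type*} [DecidableEq α]

lemma Equiv.Perm.exists_apply_eq_pair {k l k' l' : α} (hkl : k ≠ l) (hkl' : k' ≠ l') :
    ∃ τ : Equiv.Perm α, τ k = k' ∧ τ l = l' := by
  have hl : Equiv.swap k k' l ≠ k' := by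
    intro h
    apply hkl
    simpa using (congrArg (Equiv.swap k k') h).symm
  refine ⟨Equiv.swap (Equiv.swap k k' l) l' * Equiv.swap k k', ?_, ?_⟩
  · simp only [Equiv.Perm.mul_apply, Equiv.swap_apply_left]
    exact Equiv.swap_apply_of_ne_of_ne hl.symm hkl'
  · simp only [Equiv.Perm.mul_apply, Equiv.swap_apply_left]

lemma sum_offDiag_mul {R : Type*} [CommRing R] (s : Finset α) (p : α → R) :
    ∑ x ∈ s.offDiag, p x.1 * p x.2 = (∑ k ∈ s, p k) ^ 2 - ∑ k ∈ s, p k ^ 2 := by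
  rw [sq, sum_mul_sum, ← sum_product', ← diag_union_offDiag, sum_union (disjoint_diag_offDiag _),
    sum_diag]
  simp [sq]

variable [Fintype α]

lemma sum_perm_apply_pair_eq {M : Type*} [AddCommMonoid M] (f : α → α → M) {i j k l : α}
    (hij : i ≠ j) (hkl : k ≠ l) :
    ∑ σ : Equiv.Perm α, f (σ i) (σ j) = ∑ σ : Equiv.Perm α, f (σ k) (σ l) := by
  obtain ⟨τ, hτk, hτl⟩ := Equiv.Perm.exists_apply_eq_pair hkl hij
  simpa [hτk, hτl] using
    Equiv.sum_comp (Equiv.mulRight τ) fun σ : Equiv.Perm α => f (σ k) (σ l)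

/-- Double counting: sum over the `card α * (card α - 1)` ordered pairs `(k, l)` of distinct
points, then over `σ`, and reindex the inner sum by `σ`. -/
lemma card_mul_card_sub_one_mul_sum_perm {R : Type*} [CommRing R] (p : α → R) {i j : α}
    (hij : i ≠ j) :
    ((Fintype.card α * (Fintype.card α - 1) : ℕ) : R) * ∑ σ : Equiv.Perm α, p (σ i) * p (σ j)
      = (Fintype.card α)! * ((∑ k, p k) ^ 2 - ∑ k, p k ^ 2) := by
  calc ((Fintype.card α * (Fintype.card α - 1) : ℕ) : R) * ∑ σ : Equiv.Perm α, p (σ i) * p (σ j)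
      = ∑ x ∈ univ.offDiag, ∑ σ : Equiv.Perm α, p (σ x.1) * p (σ x.2) := by
        rw [sum_congr rfl fun x hx => (sum_perm_apply_pair_eq (fun k l => p k * p l) hij
          (mem_offDiag.1 hx).2.2).symm, sum_const, offDiag_card, card_univ, nsmul_eq_mul,
          Nat.mul_sub_one]
    _ = ∑ σ : Equiv.Perm α, ∑ x ∈ univ.offDiag, (p ∘ σ) x.1 * (p ∘ σ) x.2 := sum_comm
    _ = (Fintype.card α)! * ((∑ k, p k) ^ 2 - ∑ k, p k ^ 2) := by
        have hσ (σ : Equiv.Perm α) :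
            ∑ x ∈ univ.offDiag, (p ∘ σ) x.1 * (p ∘ σ) x.2 = (∑ k, p k) ^ 2 - ∑ k, p k ^ 2 := by
          rw [sum_offDiag_mul, Function.comp_def, Equiv.sum_comp σ p, Equiv.sum_comp σ (p · ^ 2)]
        rw [sum_congr rfl fun σ _ => hσ σ, sum_const, card_univ, Fintype.card_perm, nsmul_eq_mul]

end PermSum

section Measure

variable {Ω : Type*} [MeasurableSpace Ω] (μ : Measure Ω)

lemma measure_setOf_mem_eq_sum_perm {α : Type*} [Fintype α] [DecidableEq α] [MeasurableSpace α]
    [MeasurableSingletonClass α] {π : Ω → α → α} (hbij : ∀ ω, Function.Bijective (π ω))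
    (hπ : Measurable π) (E : (α → α) → Set Ω) (hE : ∀ σ : Equiv.Perm α, MeasurableSet (E σ)) :
    μ {ω | ω ∈ E (π ω)} = ∑ σ : Equiv.Perm α, μ ({ω | π ω = σ} ∩ E σ) := by
  have hcover : {ω | ω ∈ E (π ω)} = ⋃ σ : Equiv.Perm α, {ω | π ω = σ} ∩ E σ := by
    ext ω
    simp only [mem_ofPred_eq, mem_iUnion, mem_inter_iff]
    exact ⟨fun h => ⟨Equiv.ofBijective _ (hbij ω), rfl, h⟩, by rintro ⟨σ, hσ, h⟩; rwa [hσ]⟩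
  have hdisj : Pairwise (Function.onFun Disjoint fun σ : Equiv.Perm α => {ω | π ω = σ} ∩ E σ) :=
    fun σ τ hστ => (disjoint_left.2 fun ω (h₁ : π ω = σ) (h₂ : π ω = τ) =>
      hστ (Equiv.coe_fn_injective (h₁.symm.trans h₂))).mono inter_subset_left inter_subset_left
  rw [hcover, measure_iUnion hdisj fun σ => (hπ (measurableSet_singleton _)).inter (hE σ),
    tsum_fintype]

lemma measure_inter_pair_of_indep {ι β : Type*} [Fintype ι] [DecidableEq ι] [MeasurableSpace β]
    [IsProbabilityMeasure μ] {γ : Ω → ι → β} {A : Set Ω}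
    (hA : ∀ s : ι → Set β, (∀ i, MeasurableSet (s i)) →
      μ (A ∩ {ω | ∀ i, γ ω i ∈ s i}) = μ A * ∏ i, μ {ω | γ ω i ∈ s i})
    {i j : ι} (hij : i ≠ j) {S T : Set β} (hS : MeasurableSet S) (hT : MeasurableSet T) :
    μ (A ∩ {ω | γ ω i ∈ S ∧ γ ω j ∈ T})
      = μ A * (μ {ω | γ ω i ∈ S} * μ {ω | γ ω j ∈ T}) := by
  set s : ι → Set β := fun k => if k = i then S else if k = j then T else univ
  have hs : ∀ k, MeasurableSet (s k) := fun k => by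
    simp only [s]; split_ifs <;> simp [hS, hT]
  have hset : {ω | ∀ k, γ ω k ∈ s k} = {ω | γ ω i ∈ S ∧ γ ω j ∈ T} := by
    ext ω
    refine ⟨fun h => ⟨by simpa [s] using h i, by simpa [s, hij.symm] using h j⟩, ?_⟩
    rintro ⟨hi, hj⟩ k
    simp only [s]; split_ifs with hki hkj
    exacts [hki ▸ hi, hkj ▸ hj, mem_univ _]
  rw [← hset, hA s hs, prod_eq_mul_of_mem i j (mem_univ _) (mem_univ _) hij
    fun k _ hk => by simp [s, hk.1, hk.2]]
  simp [s, hij.symm]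

lemma measure_lt_eq_of_map_eq_uniform {X : Ω → ℝ} (hX : Measurable X) {n : ℕ}
    (hmap : μ.map X = (n : ENNReal) • volume.restrict (Ico (0 : ℝ) (1 / n))) (t : ℝ) :
    μ {ω | X ω < t} = ENNReal.ofReal (projIcc 0 1 zero_le_one (n * t)) := by
  change μ (X ⁻¹' Iio t) = _
  rw [← Measure.map_apply hX measurableSet_Iio, hmap, Measure.smul_apply,
    Measure.restrict_apply measurableSet_Iio, inter_comm, Ico_inter_Iio, Real.volume_Ico, sub_zero,
    smul_eq_mul, ← ENNReal.ofReal_natCast, ← ENNReal.ofReal_mul n.cast_nonneg, coe_projIcc,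
    ENNReal.ofReal_max, ENNReal.ofReal_zero, zero_max]
  rcases eq_or_ne n 0 with rfl | hn
  · simp
  · rw [mul_min_of_nonneg _ _ n.cast_nonneg, mul_one_div_cancel (Nat.cast_ne_zero.2 hn)]

lemma measure_quantizer_pair_eq_sum_perm [IsProbabilityMeasure μ] {n : ℕ} (a : ℝ)
    {π : Ω → Fin n → Fin n} (hbij : ∀ ω, Function.Bijective (π ω)) {γ : Ω → Fin n → ℝ}
    (hπmeas : Measurable π) (hγmeas : ∀ i, Measurable (fun ω => γ ω i))
    (hπ : ∀ σ : Equiv.Perm (Fin n), μ {ω | π ω = ⇑σ} = ((n.factorial : ENNReal))⁻¹)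
    (hγ : ∀ i, Measure.map (fun ω => γ ω i) μ
      = (n : ENNReal) • (volume.restrict (Set.Ico (0 : ℝ) (1 / n))))
    (hindep : ∀ (σ : Equiv.Perm (Fin n)) (s : Fin n → Set ℝ),
      (∀ i, MeasurableSet (s i)) →
      μ ({ω | π ω = ⇑σ} ∩ {ω | ∀ i, γ ω i ∈ s i})
        = μ {ω | π ω = ⇑σ} * ∏ i, μ {ω | γ ω i ∈ s i})
    {i j : Fin n} (hij : i ≠ j) :
    (μ {ω | ((π ω i : ℕ) : ℝ) / n + γ ω i < a ∧ ((π ω j : ℕ) : ℝ) / n + γ ω j < a}).toReal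
      = (n ! : ℝ)⁻¹ * ∑ σ : Equiv.Perm (Fin n), cellFraction n a (σ i) * cellFraction n a (σ j) := by
  have hn : (n : ℝ) ≠ 0 := Nat.cast_ne_zero.2 i.pos.ne'
  have hγlt (k : Fin n) (m : ℕ) :
      μ {ω | γ ω k ∈ Iio (a - m / n)} = ENNReal.ofReal (cellFraction n a m) := by
    refine (measure_lt_eq_of_map_eq_uniform μ (hγmeas k) (hγ k) _).trans ?_
    rw [mul_sub, mul_div_cancel₀ _ hn, cellFraction]
  have hpiece (σ : Equiv.Perm (Fin n)) :
      μ ({ω | π ω = σ} ∩ {ω | ((σ i : ℕ) : ℝ) / n + γ ω i < a ∧ ((σ j : ℕ) : ℝ) / n + γ ω j < a})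
        = ENNReal.ofReal ((n ! : ℝ)⁻¹ * (cellFraction n a (σ i) * cellFraction n a (σ j))) := by
    simp_rw [← lt_sub_iff_add_lt']
    refine (measure_inter_pair_of_indep μ (hindep σ) hij measurableSet_Iio
      measurableSet_Iio).trans ?_
    rw [hπ σ, hγlt, hγlt, ENNReal.ofReal_mul (by positivity),
      ENNReal.ofReal_mul (cellFraction_nonneg _ _ _), ENNReal.ofReal_inv_of_pos (by positivity),
      ENNReal.ofReal_natCast]
  have hterm_nonneg (σ : Equiv.Perm (Fin n)) :
      0 ≤ (n ! : ℝ)⁻¹ * (cellFraction n a (σ i) * cellFraction n a (σ j)) :=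
    mul_nonneg (by positivity) (mul_nonneg (cellFraction_nonneg _ _ _) (cellFraction_nonneg _ _ _))
  refine (congrArg ENNReal.toReal ((measure_setOf_mem_eq_sum_perm μ hbij hπmeas
    (fun f => {ω | ((f i : ℕ) : ℝ) / n + γ ω i < a ∧ ((f j : ℕ) : ℝ) / n + γ ω j < a})
    fun σ => by measurability).trans (sum_congr rfl fun σ _ => hpiece σ))).trans ?_
  rw [← ENNReal.ofReal_sum_of_nonneg fun σ _ => hterm_nonneg σ,
    ENNReal.toReal_ofReal (sum_nonneg fun σ _ => hterm_nonneg σ), mul_sum]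

end Measure

/-- for the correlated quantizers `Q i = 𝟙{π i/n + γ i < a}` and `i ≠ j`,
`E[Q i Q j] - a² = (1/(n(n-1)))(-n a (1-a) + c_a)` where
`c_a = (na - ⌊na⌋)(⌊na⌋ + 1 - na)`. -/
theorem correlated_quantizer_covariance (n : ℕ) (hn : 2 ≤ n) (a : ℝ)
    (ha : a ∈ Set.Icc (0 : ℝ) 1)
    {Ω : Type*} [MeasurableSpace Ω] (μ : Measure Ω) [IsProbabilityMeasure μ]
    (π : Ω → Fin n → Fin n) (hbij : ∀ ω, Function.Bijective (π ω))
    (γ : Ω → Fin n → ℝ)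
    (hπmeas : Measurable π) (hγmeas : ∀ i, Measurable (fun ω => γ ω i))
    (hπ : ∀ σ : Equiv.Perm (Fin n), μ {ω | π ω = ⇑σ} = ((n.factorial : ENNReal))⁻¹)
    (hγ : ∀ i, Measure.map (fun ω => γ ω i) μ
      = (n : ENNReal) • (volume.restrict (Set.Ico (0 : ℝ) (1 / n))))
    (hindep : ∀ (σ : Equiv.Perm (Fin n)) (s : Fin n → Set ℝ),
      (∀ i, MeasurableSet (s i)) →
      μ ({ω | π ω = ⇑σ} ∩ {ω | ∀ i, γ ω i ∈ s i})
        = μ {ω | π ω = ⇑σ} * ∏ i, μ {ω | γ ω i ∈ s i})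
    (i j : Fin n) (hij : i ≠ j) :
    (μ {ω | ((π ω i : ℕ) : ℝ) / n + γ ω i < a ∧ ((π ω j : ℕ) : ℝ) / n + γ ω j < a}).toReal
        - a ^ 2
      = (1 / ((n : ℝ) * (n - 1 : ℝ)))
        * (-((n : ℝ) * a * (1 - a))
            + ((n : ℝ) * a - ⌊(n : ℝ) * a⌋) * ((⌊(n : ℝ) * a⌋ : ℝ) + 1 - (n : ℝ) * a)) := by
  rw [measure_quantizer_pair_eq_sum_perm μ a hbij hπmeas hγmeas hπ hγ hindep hij]
  have hperm := card_mul_card_sub_one_mul_sum_perm (fun k : Fin n => cellFraction n a k) hij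
  rw [Fin.sum_univ_eq_sum_range (cellFraction n a),
    Fin.sum_univ_eq_sum_range (cellFraction n a · ^ 2), sum_cellFraction ha,
    sum_cellFraction_sq ha, Fintype.card_fin] at hperm
  push_cast [Nat.cast_sub (by omega : 1 ≤ n)] at hperm
  have hn1 : (n : ℝ) - 1 ≠ 0 := sub_ne_zero.2 (by norm_cast; omega)
  -- an opaque `F` keeps `field_simp` from rewriting `n * a` to `a * n` inside the floor
  set F : ℝ := (⌊(n : ℝ) * a⌋ : ℝ)
  field_simp
  linear_combination hperm
end

section
/- For the correlated quantizers Qᵢ(a) = 𝟙{πᵢ/n + γᵢ < a} applied to a common a ∈ [0,1]: E[(∑ᵢ₌₁ⁿ(a - Qᵢ(a)))²] = (na - ⌊na⌋)(⌊na⌋ + 1 - na) ≤ 1/4. Consequently the MSE of the average satisfies E[((1/n)∑ᵢ(a - Qᵢ(a)))²] ≤ 1/(4n²). -/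
open MeasureTheory ProbabilityTheory Function

/-!
Put `x = n a`. Since `π` is a permutation and `n γᵢ ∈ [0, 1)` almost surely, `Qᵢ(a) = 1` when
`πᵢ < ⌊x⌋` and `Qᵢ(a) = 0` when `πᵢ > ⌊x⌋`; only the single index with `πᵢ = ⌊x⌋` is random, and
its quantizer fires iff `n γᵢ < fract x`. Hence `∑ᵢ (a - Qᵢ(a)) = fract x - 𝟙_E` for that event `E`.
As `π` is independent of each `γᵢ`, `P(E) = fract x`, so the error is a centred Bernoulli variable
with second moment `fract x (1 - fract x)`.
-/

theorem ite_intCast_add_lt (j : ℤ) {t x : ℝ} (ht₀ : 0 ≤ t) (ht₁ : t < 1) :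
    (if (j : ℝ) + t < x then (1 : ℝ) else 0) =
      (if j < ⌊x⌋ then 1 else 0) + (if j = ⌊x⌋ ∧ t < Int.fract x then 1 else 0) := by
  have hx₀ := Int.floor_le x
  have hx₁ := Int.lt_floor_add_one x
  rcases lt_trichotomy j ⌊x⌋ with h | rfl | h
  · have : (j : ℝ) + 1 ≤ ⌊x⌋ := by exact_mod_cast h
    simp [h, h.ne, show (j : ℝ) + t < x by linarith]
  · simp [← Int.self_sub_floor, lt_sub_iff_add_lt']
  · have : (⌊x⌋ : ℝ) + 1 ≤ j := by exact_mod_cast h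
    simp [h.not_gt, h.ne', show ¬(j : ℝ) + t < x by linarith]

theorem sum_ite_lt_of_bijective {n : ℕ} {p : Fin n → Fin n} (hp : Bijective p)
    {m : ℤ} (hm₀ : 0 ≤ m) (hmn : m ≤ n) :
    ∑ i, (if ((p i : ℕ) : ℤ) < m then (1 : ℝ) else 0) = m := by
  lift m to ℕ using hm₀
  rw [Fintype.sum_bijective p hp _ (fun j => if ((j : ℕ) : ℤ) < m then (1 : ℝ) else 0)
    fun _ => rfl]
  simp only [Nat.cast_lt, Finset.sum_boole, Fin.card_filter_val_lt]
  norm_cast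
  omega

theorem sum_sub_ite_div_add_lt {n : ℕ} {p : Fin n → Fin n} (hp : Bijective p)
    {g : Fin n → ℝ} (hg : ∀ i, g i ∈ Set.Ico 0 (1 / (n : ℝ))) {a : ℝ} (ha : a ∈ Set.Icc 0 1) :
    ∑ i, (a - if ((p i : ℕ) : ℝ) / n + g i < a then 1 else 0) =
      Int.fract (n * a) -
        ∑ i, if ((p i : ℕ) : ℤ) = ⌊n * a⌋ ∧ g i < Int.fract (n * a) / n then 1 else 0 := by
  have hsplit : ∀ i, (if ((p i : ℕ) : ℝ) / n + g i < a then (1 : ℝ) else 0) =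
      (if ((p i : ℕ) : ℤ) < ⌊n * a⌋ then 1 else 0) +
        (if ((p i : ℕ) : ℤ) = ⌊n * a⌋ ∧ g i < Int.fract (n * a) / n then 1 else 0) := by
    intro i
    have hn : (0 : ℝ) < n := by exact_mod_cast i.pos
    obtain ⟨hg₀, hg₁⟩ := hg i
    have hlt : ((p i : ℕ) : ℝ) / n + g i < a ↔ (((p i : ℕ) : ℤ) : ℝ) + n * g i < n * a := by
      rw [div_add' _ _ _ hn.ne', div_lt_iff₀ hn]
      push_cast
      constructor <;> intro h <;> linarith
    have hscale : g i < Int.fract (n * a) / n ↔ n * g i < Int.fract (n * a) := by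
      rw [lt_div_iff₀ hn, mul_comm]
    simp only [hlt, hscale]
    exact ite_intCast_add_lt _ (by positivity) (by rwa [lt_div_iff₀' hn] at hg₁)
  have hfloor₀ : 0 ≤ ⌊(n : ℝ) * a⌋ := Int.floor_nonneg.2 (mul_nonneg n.cast_nonneg ha.1)
  have hfloor₁ : ⌊(n : ℝ) * a⌋ ≤ n := by
    simpa using Int.floor_le_floor (mul_le_of_le_one_right n.cast_nonneg ha.2)
  simp only [Finset.sum_sub_distrib, hsplit, Finset.sum_add_distrib,
    sum_ite_lt_of_bijective hp hfloor₀ hfloor₁, Finset.sum_const, Finset.card_univ,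
    Fintype.card_fin, nsmul_eq_mul, ← Int.self_sub_floor]
  ring

section

variable {Ω : Type*} [MeasurableSpace Ω] {μ : Measure Ω}

theorem integral_sub_indicator_one_sq [IsProbabilityMeasure μ] {E : Set Ω} (hE : MeasurableSet E)
    {c : ℝ} (hc : μ.real E = c) :
    ∫ ω, (c - E.indicator 1 ω) ^ 2 ∂μ = c * (1 - c) := by
  have hsq : ∀ ω, (c - E.indicator 1 ω) ^ 2 = c ^ 2 + (1 - 2 * c) * E.indicator 1 ω := by
    intro ω
    by_cases hω : ω ∈ E
    · simp only [Set.indicator_of_mem hω, Pi.one_apply]; ring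
    · simp only [Set.indicator_of_notMem hω]; ring
  simp_rw [hsq]
  rw [integral_add (integrable_const _) ((integrable_indicator_iff hE).2
    (integrable_const 1).integrableOn |>.const_mul _), integral_const_mul,
    integral_indicator_one hE, hc, integral_const, probReal_univ, one_smul]
  ring

theorem measure_preimage_inter_eq_mul_of_forall_singleton {β : Type*} [Finite β]
    [MeasurableSpace β] [MeasurableSingletonClass β] {X : Ω → β} (hX : Measurable X)
    {B : Set Ω} (h : ∀ b, μ (X ⁻¹' {b} ∩ B) = μ (X ⁻¹' {b}) * μ B) (A : Set β) :
    μ (X ⁻¹' A ∩ B) = μ (X ⁻¹' A) * μ B := by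
  have hfib : ∀ b, MeasurableSet (X ⁻¹' {b}) := fun b => hX (measurableSet_singleton b)
  obtain ⟨s, rfl⟩ : ∃ s : Finset β, (s : Set β) = A := ⟨(Set.toFinite A).toFinset, by simp⟩
  rw [← Measure.restrict_apply (hX s.measurableSet),
    ← sum_measure_preimage_singleton s fun b _ => hfib b,
    ← sum_measure_preimage_singleton s fun b _ => hfib b, Finset.sum_mul]
  refine Finset.sum_congr rfl fun b _ => ?_
  rw [Measure.restrict_apply (hfib b), h b]

theorem measure_preimage_inter_apply_mem_eq_mul {ι E : Type*} [Fintype ι]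
    [MeasurableSpace ι] [MeasurableSingletonClass ι] [MeasurableSpace E] [IsProbabilityMeasure μ]
    {π : Ω → ι → ι} (hbij : ∀ ω, Bijective (π ω)) (hπ : Measurable π) {γ : Ω → ι → E}
    (hindep : ∀ (σ : Equiv.Perm ι) (s : ι → Set E), (∀ i, MeasurableSet (s i)) →
      μ ({ω | π ω = ⇑σ} ∩ {ω | ∀ i, γ ω i ∈ s i})
        = μ {ω | π ω = ⇑σ} * ∏ i, μ {ω | γ ω i ∈ s i})
    (A : Set (ι → ι)) (i : ι) {s : Set E} (hs : MeasurableSet s) :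
    μ (π ⁻¹' A ∩ {ω | γ ω i ∈ s}) = μ (π ⁻¹' A) * μ {ω | γ ω i ∈ s} := by
  classical
  refine measure_preimage_inter_eq_mul_of_forall_singleton hπ (fun g => ?_) A
  by_cases hg : Bijective g
  · have key := hindep (Equiv.ofBijective g hg) (fun j => if j = i then s else Set.univ)
      fun j => by split_ifs <;> simp [hs]
    have hprod : ∏ j, μ {ω | γ ω j ∈ if j = i then s else Set.univ} = μ {ω | γ ω i ∈ s} :=
      (Fintype.prod_eq_single i fun j hj => by simp [hj]).trans (by simp)
    rw [hprod] at key
    simpa [Set.preimage] using key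
  · have : π ⁻¹' {g} = ∅ := Set.eq_empty_of_forall_notMem fun ω hω => hg (hω ▸ hbij ω)
    simp [this]

theorem measure_iUnion_inter_eq_mul {ι : Type*} [Fintype ι] {F G : ι → Set Ω}
    (hF : Pairwise (Disjoint on F)) (hFm : ∀ i, MeasurableSet (F i))
    (hGm : ∀ i, MeasurableSet (G i)) {c : ENNReal} (hFG : ∀ i, μ (F i ∩ G i) = μ (F i) * c) :
    μ (⋃ i, F i ∩ G i) = μ (⋃ i, F i) * c := by
  rw [measure_iUnion (fun i j hij => (hF hij).mono Set.inter_subset_left Set.inter_subset_left)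
    fun i => (hFm i).inter (hGm i), measure_iUnion hF hFm, tsum_fintype, tsum_fintype,
    Finset.sum_mul]
  exact Finset.sum_congr rfl fun i _ => hFG i

theorem ae_mem_of_map_eq_smul_restrict {α : Type*} [MeasurableSpace α] {ν : Measure α}
    {Y : Ω → α} (hY : Measurable Y) {c : ENNReal} {s : Set α} (hs : MeasurableSet s)
    (h : μ.map Y = c • ν.restrict s) :
    ∀ᵐ ω ∂μ, Y ω ∈ s :=
  (ae_map_iff hY.aemeasurable hs).1 (h ▸ Measure.ae_smul_measure (ae_restrict_mem hs) c)

theorem measure_lt_div_of_map_eq_uniform {Y : Ω → ℝ} (hY : Measurable Y) {n : ℕ} (hn : 0 < n)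
    (h : μ.map Y = (n : ENNReal) • volume.restrict (Set.Ico (0 : ℝ) (1 / n)))
    {t : ℝ} (ht : t ≤ 1) :
    μ {ω | Y ω < t / n} = ENNReal.ofReal t := by
  have hn' : (0 : ℝ) < n := by exact_mod_cast hn
  have hIco : Set.Iio (t / n) ∩ Set.Ico 0 (1 / n) = Set.Ico 0 (t / n) := by
    rw [Set.inter_comm, Set.Ico_inter_Iio, min_eq_right (by gcongr)]
  change μ (Y ⁻¹' Set.Iio (t / n)) = _
  rw [← Measure.map_apply hY measurableSet_Iio, h, Measure.smul_apply,
    Measure.restrict_apply measurableSet_Iio, hIco, Real.volume_Ico, sub_zero, smul_eq_mul,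
    ← ENNReal.ofReal_natCast, ← ENNReal.ofReal_mul hn'.le, mul_div_cancel₀ _ hn'.ne']

end

section RoundUpEvent

variable {Ω : Type*} {n : ℕ} {π : Ω → Fin n → Fin n} {γ : Ω → Fin n → ℝ}

def roundUpEvent (π : Ω → Fin n → Fin n) (γ : Ω → Fin n → ℝ) (x : ℝ) : Set Ω :=
  ⋃ i, π ⁻¹' {g | ((g i : ℕ) : ℤ) = ⌊x⌋} ∩ {ω | γ ω i < Int.fract x / n}

theorem pairwise_disjoint_preimage_apply_eq (hinj : ∀ ω, Injective (π ω)) (k : ℤ) :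
    Pairwise (Disjoint on fun i => π ⁻¹' {g : Fin n → Fin n | ((g i : ℕ) : ℤ) = k}) :=
  fun i j hij => Set.disjoint_left.2 fun ω hi hj => hij (hinj ω (Fin.ext (by
    simp only [Set.mem_preimage, Set.mem_ofPred_eq] at hi hj; omega)))

variable [MeasurableSpace Ω] {μ : Measure Ω}

theorem measurableSet_roundUpEvent (hπ : Measurable π) (hγ : ∀ i, Measurable fun ω => γ ω i)
    (x : ℝ) : MeasurableSet (roundUpEvent π γ x) :=
  .iUnion fun i => (hπ (Set.toFinite _).measurableSet).inter (hγ i measurableSet_Iio)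

theorem measureReal_roundUpEvent [IsProbabilityMeasure μ] (hbij : ∀ ω, Bijective (π ω))
    (hπ : Measurable π) (hγm : ∀ i, Measurable fun ω => γ ω i)
    (hγ : ∀ i, μ.map (fun ω => γ ω i) = (n : ENNReal) • volume.restrict (Set.Ico (0 : ℝ) (1 / n)))
    (hindep : ∀ (σ : Equiv.Perm (Fin n)) (s : Fin n → Set ℝ), (∀ i, MeasurableSet (s i)) →
      μ ({ω | π ω = ⇑σ} ∩ {ω | ∀ i, γ ω i ∈ s i}) = μ {ω | π ω = ⇑σ} * ∏ i, μ {ω | γ ω i ∈ s i})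
    {x : ℝ} (hx : x ∈ Set.Icc 0 (n : ℝ)) :
    μ.real (roundUpEvent π γ x) = Int.fract x := by
  have hFG : ∀ i, μ (π ⁻¹' {g | ((g i : ℕ) : ℤ) = ⌊x⌋} ∩ {ω | γ ω i < Int.fract x / n}) =
      μ (π ⁻¹' {g | ((g i : ℕ) : ℤ) = ⌊x⌋}) * ENNReal.ofReal (Int.fract x) := fun i =>
    (measure_preimage_inter_apply_mem_eq_mul hbij hπ hindep _ i measurableSet_Iio).trans
      (congrArg _ (measure_lt_div_of_map_eq_uniform (hγm i) i.pos (hγ i) (Int.fract_lt_one _).le))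
  rw [measureReal_def, roundUpEvent, measure_iUnion_inter_eq_mul
    (pairwise_disjoint_preimage_apply_eq (fun ω => (hbij ω).1) _)
    (fun i => hπ (Set.toFinite _).measurableSet)
    (fun i => measurableSet_lt (hγm i) measurable_const) hFG]
  rcases eq_or_ne (Int.fract x) 0 with hf | hf
  · simp [hf]
  -- Otherwise `⌊x⌋ < x ≤ n`, so every permutation takes the value `⌊x⌋`.
  have hk₀ : 0 ≤ ⌊x⌋ := Int.floor_nonneg.2 hx.1
  have hkn : ⌊x⌋ < n := by
    have := (Int.fract_nonneg x).lt_of_ne' hf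
    rw [← Int.self_sub_floor] at this
    exact_mod_cast (show (⌊x⌋ : ℝ) < n by linarith [hx.2])
  have hcover : ⋃ i, π ⁻¹' {g | ((g i : ℕ) : ℤ) = ⌊x⌋} = Set.univ :=
    Set.eq_univ_of_forall fun ω => by
      obtain ⟨i, hi⟩ := (hbij ω).2 ⟨⌊x⌋.toNat, by omega⟩
      exact Set.mem_iUnion.2 ⟨i, by simp [hi, hk₀]⟩
  rw [hcover, measure_univ, one_mul, ENNReal.toReal_ofReal (Int.fract_nonneg _)]

theorem ae_sum_sub_ite_eq_fract_sub_indicator (hbij : ∀ ω, Bijective (π ω))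
    (hγm : ∀ i, Measurable fun ω => γ ω i)
    (hγ : ∀ i, μ.map (fun ω => γ ω i) = (n : ENNReal) • volume.restrict (Set.Ico (0 : ℝ) (1 / n)))
    {a : ℝ} (ha : a ∈ Set.Icc 0 1) :
    ∀ᵐ ω ∂μ, ∑ i, (a - if ((π ω i : ℕ) : ℝ) / n + γ ω i < a then 1 else 0) =
      Int.fract (n * a) - (roundUpEvent π γ (n * a)).indicator 1 ω := by
  filter_upwards [ae_all_iff.2 fun i =>
    ae_mem_of_map_eq_smul_restrict (hγm i) measurableSet_Ico (hγ i)] with ω hω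
  have hdisj : (↑(Finset.univ : Finset (Fin n)) : Set (Fin n)).PairwiseDisjoint fun i =>
      π ⁻¹' {g | ((g i : ℕ) : ℤ) = ⌊(n : ℝ) * a⌋} ∩ {ω | γ ω i < Int.fract ((n : ℝ) * a) / n} :=
    fun i _ j _ hij => ((pairwise_disjoint_preimage_apply_eq (fun ω => (hbij ω).1) _) hij).mono
      Set.inter_subset_left Set.inter_subset_left
  have hsum := Finset.indicator_biUnion_apply _ _ hdisj (f := (1 : Ω → ℝ)) ω
  simp only [Finset.mem_univ, Set.iUnion_true] at hsum
  rw [roundUpEvent, hsum, sum_sub_ite_div_add_lt (hbij ω) hω ha]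
  simp [Set.indicator_apply]

end RoundUpEvent

theorem correlated_quantizer_mse_general (n : ℕ) (a : ℝ)
    (ha : a ∈ Set.Icc (0 : ℝ) 1)
    {Ω : Type*} [MeasurableSpace Ω] (μ : Measure Ω) [IsProbabilityMeasure μ]
    (π : Ω → Fin n → Fin n) (hbij : ∀ ω, Function.Bijective (π ω))
    (γ : Ω → Fin n → ℝ)
    (hπmeas : Measurable π) (hγmeas : ∀ i, Measurable (fun ω => γ ω i))
    (hγ : ∀ i, Measure.map (fun ω => γ ω i) μ
      = (n : ENNReal) • (volume.restrict (Set.Ico (0 : ℝ) (1 / n))))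
    (hindep : ∀ (σ : Equiv.Perm (Fin n)) (s : Fin n → Set ℝ),
      (∀ i, MeasurableSet (s i)) →
      μ ({ω | π ω = ⇑σ} ∩ {ω | ∀ i, γ ω i ∈ s i})
        = μ {ω | π ω = ⇑σ} * ∏ i, μ {ω | γ ω i ∈ s i})
    (Q : Fin n → Ω → ℝ)
    (hQ : ∀ i ω, Q i ω = if ((π ω i : ℕ) : ℝ) / n + γ ω i < a then 1 else 0) :
    (∫ ω, (∑ i, (a - Q i ω)) ^ 2 ∂μ
        = ((n : ℝ) * a - ⌊(n : ℝ) * a⌋) * ((⌊(n : ℝ) * a⌋ : ℝ) + 1 - (n : ℝ) * a)) ∧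
    ((n : ℝ) * a - ⌊(n : ℝ) * a⌋) * ((⌊(n : ℝ) * a⌋ : ℝ) + 1 - (n : ℝ) * a) ≤ 1 / 4 ∧
    ∫ ω, ((1 / (n : ℝ)) * ∑ i, (a - Q i ω)) ^ 2 ∂μ ≤ 1 / (4 * (n : ℝ) ^ 2) := by
  have hna : (n : ℝ) * a ∈ Set.Icc 0 (n : ℝ) :=
    ⟨mul_nonneg n.cast_nonneg ha.1, mul_le_of_le_one_right n.cast_nonneg ha.2⟩
  set f := Int.fract ((n : ℝ) * a)
  have herr : ∀ᵐ ω ∂μ, ∑ i, (a - Q i ω) = f - (roundUpEvent π γ (n * a)).indicator 1 ω := by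
    simpa only [← hQ] using ae_sum_sub_ite_eq_fract_sub_indicator hbij hγmeas hγ ha
  have hmse : ∫ ω, (∑ i, (a - Q i ω)) ^ 2 ∂μ = f * (1 - f) := by
    rw [integral_congr_ae (herr.mono fun ω h => by rw [h])]
    exact integral_sub_indicator_one_sq (measurableSet_roundUpEvent hπmeas hγmeas _)
      (measureReal_roundUpEvent hbij hπmeas hγmeas hγ hindep hna)
  have hquarter : f * (1 - f) ≤ 1 / 4 := by nlinarith [sq_nonneg (f - 1 / 2)]
  have hfract : ((n : ℝ) * a - ⌊(n : ℝ) * a⌋) * ((⌊(n : ℝ) * a⌋ : ℝ) + 1 - (n : ℝ) * a) =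
      f * (1 - f) := by
    rw [show f = (n : ℝ) * a - ⌊(n : ℝ) * a⌋ from (Int.self_sub_floor _).symm]; ring
  refine ⟨hfract ▸ hmse, hfract ▸ hquarter, ?_⟩
  simp_rw [mul_pow, integral_const_mul, hmse]
  calc (1 / (n : ℝ)) ^ 2 * (f * (1 - f)) ≤ (1 / (n : ℝ)) ^ 2 * (1 / 4) := by gcongr
    _ = 1 / (4 * (n : ℝ) ^ 2) := by ring

/-- for the correlated quantizers `Q i = 𝟙{π i/n + γ i < a}` applied to a common
`a ∈ [0,1]`, `E[(∑ i (a - Q i))²] = (na - ⌊na⌋)(⌊na⌋ + 1 - na) ≤ 1/4`, and therefore the MSE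
of the average satisfies `E[((1/n) ∑ i (a - Q i))²] ≤ 1/(4n²)`. -/
theorem correlated_quantizer_mse (n : ℕ) (hn : 0 < n) (a : ℝ)
    (ha : a ∈ Set.Icc (0 : ℝ) 1)
    {Ω : Type*} [MeasurableSpace Ω] (μ : Measure Ω) [IsProbabilityMeasure μ]
    (π : Ω → Fin n → Fin n) (hbij : ∀ ω, Function.Bijective (π ω))
    (γ : Ω → Fin n → ℝ)
    (hπmeas : Measurable π) (hγmeas : ∀ i, Measurable (fun ω => γ ω i))
    (hπ : ∀ σ : Equiv.Perm (Fin n), μ {ω | π ω = ⇑σ} = ((n.factorial : ENNReal))⁻¹)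
    (hγ : ∀ i, Measure.map (fun ω => γ ω i) μ
      = (n : ENNReal) • (volume.restrict (Set.Ico (0 : ℝ) (1 / n))))
    (hindep : ∀ (σ : Equiv.Perm (Fin n)) (s : Fin n → Set ℝ),
      (∀ i, MeasurableSet (s i)) →
      μ ({ω | π ω = ⇑σ} ∩ {ω | ∀ i, γ ω i ∈ s i})
        = μ {ω | π ω = ⇑σ} * ∏ i, μ {ω | γ ω i ∈ s i})
    (Q : Fin n → Ω → ℝ)
    (hQ : ∀ i ω, Q i ω = if ((π ω i : ℕ) : ℝ) / n + γ ω i < a then 1 else 0) :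
    (∫ ω, (∑ i, (a - Q i ω)) ^ 2 ∂μ
        = ((n : ℝ) * a - ⌊(n : ℝ) * a⌋) * ((⌊(n : ℝ) * a⌋ : ℝ) + 1 - (n : ℝ) * a)) ∧
    ((n : ℝ) * a - ⌊(n : ℝ) * a⌋) * ((⌊(n : ℝ) * a⌋ : ℝ) + 1 - (n : ℝ) * a) ≤ 1 / 4 ∧
    ∫ ω, ((1 / (n : ℝ)) * ∑ i, (a - Q i ω)) ^ 2 ∂μ ≤ 1 / (4 * (n : ℝ) ^ 2) :=
  correlated_quantizer_mse_general n a ha μ π hbij γ hπmeas hγmeas hγ hindep Q hQ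
end

section
/- Let S be importance sampling with probabilities qᵢ > 0 (∑qᵢ = 1), and let Q be an unbiased random compressor with E‖Q(a) − a‖² ≤ ω‖a‖², applied independently to each aᵢ. Then E‖S(Q(a₁),…,Q(aₙ)) − (1/n)∑ᵢaᵢ‖² ≤ ((1+ω)/n²)∑ᵢ (1/qᵢ)‖aᵢ‖² − ‖(1/n)∑ᵢaᵢ‖². -/
/-!
Conditionally on `χ = i`, the estimator `(n qᵢ)⁻¹ Q(aᵢ)` has mean `yᵢ = (n qᵢ)⁻¹ aᵢ`, so its
mean squared distance to any point `c` is its variance plus `‖yᵢ - c‖²` (bias–variance), and the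
compressor's variance bound makes the first term at most `ω ‖yᵢ‖²`. Averaging over `χ`, the bias
terms form the variance `∑ qᵢ ‖yᵢ‖² - ‖∑ qᵢ yᵢ‖²` of plain importance sampling, whose mean
`∑ qᵢ yᵢ` is exactly `(1/n) ∑ aᵢ`.
-/

open MeasureTheory

section BiasVariance

variable {E : Type*} [NormedAddCommGroup E] [InnerProductSpace ℝ E] [CompleteSpace E]
  {Ω : Type*} [MeasurableSpace Ω] {μ : Measure Ω} [IsProbabilityMeasure μ]

theorem integral_norm_sub_sq_eq_of_integral_eq {X : Ω → E} {m : E} (hX : Integrable X μ)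
    (hm : ∫ ω, X ω ∂μ = m) (hX₂ : Integrable (fun ω => ‖X ω - m‖ ^ 2) μ) (c : E) :
    ∫ ω, ‖X ω - c‖ ^ 2 ∂μ = ∫ ω, ‖X ω - m‖ ^ 2 ∂μ + ‖m - c‖ ^ 2 := by
  have hexpand : ∀ ω, ‖X ω - c‖ ^ 2
      = ‖X ω - m‖ ^ 2 + 2 * inner ℝ (m - c) (X ω - m) + ‖m - c‖ ^ 2 := fun ω => by
    rw [← sub_add_sub_cancel (X ω) m c, norm_add_sq_real, real_inner_comm]
  have hcentered : Integrable (fun ω => X ω - m) μ := hX.sub (integrable_const m)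
  have hcross : ∫ ω, inner ℝ (m - c) (X ω - m) ∂μ = 0 := by
    rw [integral_inner hcentered, integral_sub hX (integrable_const m), hm, integral_const,
      probReal_univ, one_smul, sub_self, inner_zero_right]
  have hcross_int : Integrable (fun ω => 2 * inner ℝ (m - c) (X ω - m)) μ :=
    (hcentered.const_inner (m - c)).const_mul 2
  have hlinear_int : Integrable
      (fun ω => ‖X ω - m‖ ^ 2 + 2 * inner ℝ (m - c) (X ω - m)) μ := hX₂.add hcross_int
  simp_rw [hexpand]
  rw [integral_add hlinear_int (integrable_const _), integral_add hX₂ hcross_int,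
    integral_const_mul, hcross, integral_const, probReal_univ, one_smul, mul_zero, add_zero]

theorem integral_norm_smul_sub_sq_le_of_unbiased {Y : Ω → E} {a : E} {ω₀ : ℝ}
    (hY : Integrable Y μ) (hY₂ : Integrable (fun ω => ‖Y ω - a‖ ^ 2) μ) (hunbiased : ∫ ω, Y ω ∂μ = a)
    (hvar : ∫ ω, ‖Y ω - a‖ ^ 2 ∂μ ≤ ω₀ * ‖a‖ ^ 2) (t : ℝ) (c : E) :
    ∫ ω, ‖t • Y ω - c‖ ^ 2 ∂μ ≤ ω₀ * ‖t • a‖ ^ 2 + ‖t • a - c‖ ^ 2 := by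
  have hscale : ∀ x y : E, ‖t • x - t • y‖ ^ 2 = t ^ 2 * ‖x - y‖ ^ 2 := fun x y => by
    rw [← smul_sub, norm_smul, mul_pow, Real.norm_eq_abs, sq_abs]
  have hmean : ∫ ω, t • Y ω ∂μ = t • a := by rw [integral_smul, hunbiased]
  rw [integral_norm_sub_sq_eq_of_integral_eq (X := fun ω => t • Y ω) (hY.smul t) hmean
    (by simpa only [hscale] using hY₂.const_mul (t ^ 2)) c]
  simp_rw [hscale, integral_const_mul, norm_smul, mul_pow, Real.norm_eq_abs, sq_abs]
  linarith [mul_le_mul_of_nonneg_left hvar (sq_nonneg t)]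

end BiasVariance

theorem sum_mul_norm_sub_sq_eq {ι E : Type*} [Fintype ι] [NormedAddCommGroup E]
    [InnerProductSpace ℝ E] {q : ι → ℝ} (hq : ∑ i, q i = 1) (y : ι → E) :
    ∑ i, q i * ‖y i - ∑ j, q j • y j‖ ^ 2 = ∑ i, q i * ‖y i‖ ^ 2 - ‖∑ j, q j • y j‖ ^ 2 := by
  set c := ∑ j, q j • y j
  have hcross : ∑ i, q i * inner ℝ (y i) c = ‖c‖ ^ 2 := by
    simp_rw [← real_inner_smul_left]
    rw [← sum_inner, real_inner_self_eq_norm_sq]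
  simp_rw [norm_sub_sq_real, mul_add, mul_sub, Finset.sum_add_distrib, Finset.sum_sub_distrib,
    ← Finset.sum_mul, hq, mul_left_comm _ (2 : ℝ), ← Finset.mul_sum, hcross]
  ring

theorem importance_sampling_compression_general (d n : ℕ)
    (q : Fin n → ℝ) (hq : ∀ i, 0 < q i) (hsum : ∑ i, q i = 1)
    {Ω : Type*} [MeasurableSpace Ω] (μ : Measure Ω) [IsProbabilityMeasure μ]
    (Q : Ω → EuclideanSpace ℝ (Fin d) → EuclideanSpace ℝ (Fin d)) (ω₀ : ℝ)
    (hint : ∀ a : EuclideanSpace ℝ (Fin d), Integrable (fun ω => Q ω a) μ)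
    (hint2 : ∀ a : EuclideanSpace ℝ (Fin d), Integrable (fun ω => ‖Q ω a - a‖ ^ 2) μ)
    (hunbiased : ∀ a : EuclideanSpace ℝ (Fin d), ∫ ω, Q ω a ∂μ = a)
    (hvar : ∀ a : EuclideanSpace ℝ (Fin d), ∫ ω, ‖Q ω a - a‖ ^ 2 ∂μ ≤ ω₀ * ‖a‖ ^ 2)
    (a : Fin n → EuclideanSpace ℝ (Fin d)) :
    ∑ i, q i * ∫ ω, ‖((n : ℝ) * q i)⁻¹ • Q ω (a i) - (1 / (n : ℝ)) • ∑ j, a j‖ ^ 2 ∂μ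
      ≤ ((1 + ω₀) / (n : ℝ) ^ 2) * ∑ i, (1 / q i) * ‖a i‖ ^ 2
        - ‖(1 / (n : ℝ)) • ∑ i, a i‖ ^ 2 := by
  set y : Fin n → EuclideanSpace ℝ (Fin d) := fun i => ((n : ℝ) * q i)⁻¹ • a i
  have hmean : ∑ i, q i • y i = (1 / (n : ℝ)) • ∑ i, a i := by
    rw [Finset.smul_sum]
    refine Finset.sum_congr rfl fun i _ => ?_
    have := (hq i).ne'
    rw [smul_smul]
    field_simp
  have hsecond_moment : ∑ i, q i * ‖y i‖ ^ 2 = 1 / (n : ℝ) ^ 2 * ∑ i, (1 / q i) * ‖a i‖ ^ 2 := by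
    rw [Finset.mul_sum]
    refine Finset.sum_congr rfl fun i _ => ?_
    have := (hq i).ne'
    rw [norm_smul, mul_pow, norm_inv, norm_mul, Real.norm_natCast, Real.norm_of_nonneg (hq i).le]
    field_simp
  calc _ ≤ ∑ i, q i * (ω₀ * ‖y i‖ ^ 2 + ‖y i - (1 / (n : ℝ)) • ∑ j, a j‖ ^ 2) :=
        Finset.sum_le_sum fun i _ => mul_le_mul_of_nonneg_left
          (integral_norm_smul_sub_sq_le_of_unbiased (hint _) (hint2 _) (hunbiased _) (hvar _) _ _)
          (hq i).le
    _ = ω₀ * ∑ i, q i * ‖y i‖ ^ 2 + ∑ i, q i * ‖y i - ∑ j, q j • y j‖ ^ 2 := by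
        simp_rw [mul_add, Finset.sum_add_distrib, mul_left_comm (q _) ω₀, ← Finset.mul_sum, hmean]
    _ = _ := by
        rw [sum_mul_norm_sub_sq_eq hsum, hmean, hsecond_moment]
        ring

/-- composition of an unbiased compressor `Q` (with
`E‖Q(a) − a‖² ≤ ω‖a‖²`) with importance sampling (probabilities `q i`, independent of `Q`)
satisfies `E‖S(Q(a₁),…,Q(aₙ)) − (1/n)∑aᵢ‖² ≤ ((1+ω)/n²)∑ (1/qᵢ)‖aᵢ‖² − ‖(1/n)∑aᵢ‖²`. -/
theorem importance_sampling_compression (d n : ℕ) (hn : 0 < n)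
    (q : Fin n → ℝ) (hq : ∀ i, 0 < q i) (hsum : ∑ i, q i = 1)
    {Ω : Type*} [MeasurableSpace Ω] (μ : Measure Ω) [IsProbabilityMeasure μ]
    (Q : Ω → EuclideanSpace ℝ (Fin d) → EuclideanSpace ℝ (Fin d)) (ω₀ : ℝ) (hω : 0 ≤ ω₀)
    (hint : ∀ a : EuclideanSpace ℝ (Fin d), Integrable (fun ω => Q ω a) μ)
    (hint2 : ∀ a : EuclideanSpace ℝ (Fin d), Integrable (fun ω => ‖Q ω a - a‖ ^ 2) μ)
    (hunbiased : ∀ a : EuclideanSpace ℝ (Fin d), ∫ ω, Q ω a ∂μ = a)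
    (hvar : ∀ a : EuclideanSpace ℝ (Fin d), ∫ ω, ‖Q ω a - a‖ ^ 2 ∂μ ≤ ω₀ * ‖a‖ ^ 2)
    (a : Fin n → EuclideanSpace ℝ (Fin d)) :
    ∑ i, q i * ∫ ω, ‖((n : ℝ) * q i)⁻¹ • Q ω (a i) - (1 / (n : ℝ)) • ∑ j, a j‖ ^ 2 ∂μ
      ≤ ((1 + ω₀) / (n : ℝ) ^ 2) * ∑ i, (1 / q i) * ‖a i‖ ^ 2
        - ‖(1 / (n : ℝ)) • ∑ i, a i‖ ^ 2 :=
  importance_sampling_compression_general d n q hq hsum μ Q ω₀ hint hint2 hunbiased hvar a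
end

section
/- Let Q₁,…,Qₙ : ℝᵈ → ℝᵈ be individually unbiased random operators. If S : (ℝᵈ)ⁿ → ℝᵈ satisfies the weighted AB-inequality with constants A, B and weights wᵢ summing to 1, and the functions f₁,…,fₙ satisfy the weighted smoothness and weighted Hessian-variance conditions with constants L₊,w and L±,w, then for the MARINA gradient estimator g^{t+1} (equal to ∇f(x^{t+1}) with probability p, and g^t + S({∇fᵢ(x^{t+1}) − ∇fᵢ(x^t)}) otherwise), conditionally on x^{t+1}: E‖g^{t+1} − ∇f(x^{t+1})‖² ≤ (1−p)((A−B)L₊,w² + B·L±,w²)‖x^{t+1} − x^t‖² + (1−p)‖g^t − ∇f(x^t)‖². -/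
/-!
With `m = ∇f(x⁺) − ∇f(x)` the mean of `S` applied to the gradient differences, the new error
`g + S − ∇f(x⁺)` is the centred noise `S − m` plus the deterministic old error `g − ∇f(x)`.
The cross term has mean zero, so the second moment splits into the variance of `S` plus
`‖g − ∇f(x)‖²`. The AB-inequality bounds that variance by `A s − B ‖m‖²`, where `s` is the
weighted second moment of the gradient differences, and
`A s − B ‖m‖² = (A − B) s + B (s − ‖m‖²)` is controlled term by term by weighted smoothness
and weighted Hessian variance.
-/

open MeasureTheory

theorem gradient_const_mul_sum {ι E : Type*} [NormedAddCommGroup E] [InnerProductSpace ℝ E]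
    [CompleteSpace E] {f : ι → E → ℝ} {x : E} (s : Finset ι)
    (hf : ∀ i ∈ s, DifferentiableAt ℝ (f i) x) (c : ℝ) :
    gradient (fun z => c * ∑ i ∈ s, f i z) x = c • ∑ i ∈ s, gradient (f i) x := by
  refine HasGradientAt.gradient ?_
  rw [hasGradientAt_iff_hasFDerivAt, map_smul, map_sum]
  exact (HasFDerivAt.fun_sum fun i hi =>
    hasGradientAt_iff_hasFDerivAt.mp (hf i hi).hasGradientAt).const_mul c

theorem integral_norm_add_const_sq {Ω E : Type*} [MeasurableSpace Ω] {μ : Measure Ω}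
    [IsProbabilityMeasure μ] [NormedAddCommGroup E] [InnerProductSpace ℝ E] [CompleteSpace E]
    {Y : Ω → E} (hY : Integrable Y μ) (hY2 : Integrable (fun ω => ‖Y ω‖ ^ 2) μ)
    (hmean : ∫ ω, Y ω ∂μ = 0) (c : E) :
    ∫ ω, ‖Y ω + c‖ ^ 2 ∂μ = ∫ ω, ‖Y ω‖ ^ 2 ∂μ + ‖c‖ ^ 2 := by
  have hcross : ∫ ω, inner ℝ (Y ω) c ∂μ = 0 := by
    simp_rw [real_inner_comm c]
    rw [integral_inner hY, hmean, inner_zero_right]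
  have hcross_int : Integrable (fun ω => 2 * inner ℝ (Y ω) c) μ := (hY.inner_const c).const_mul 2
  simp_rw [norm_add_sq_real]
  rw [integral_add (f := fun ω => ‖Y ω‖ ^ 2 + 2 * inner ℝ (Y ω) c) (hY2.add hcross_int)
      (integrable_const _),
    integral_add hY2 hcross_int, integral_const_mul, hcross]
  simp

theorem le_sub_mul_add_mul_of_le_mul_sub_mul {A B a s m L₁ L₂ : ℝ} (hB : 0 ≤ B) (hBA : B ≤ A)
    (hAB : a ≤ A * s - B * m) (hs : s ≤ L₁) (hsm : s - m ≤ L₂) :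
    a ≤ (A - B) * L₁ + B * L₂ := by
  nlinarith [mul_le_mul_of_nonneg_left hs (sub_nonneg.mpr hBA), mul_le_mul_of_nonneg_left hsm hB]

theorem marina_variance_lemma_general (d n : ℕ)
    {Ω : Type*} [MeasurableSpace Ω] (μ : Measure Ω) [IsProbabilityMeasure μ]
    (S : Ω → (Fin n → EuclideanSpace ℝ (Fin d)) → EuclideanSpace ℝ (Fin d))
    (A B : ℝ) (hB : 0 ≤ B) (hBA : B ≤ A)
    (w : Fin n → ℝ)
    (hSint : ∀ v : Fin n → EuclideanSpace ℝ (Fin d), Integrable (fun ω => S ω v) μ)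
    (hSint2 : ∀ v : Fin n → EuclideanSpace ℝ (Fin d),
      Integrable (fun ω => ‖S ω v - (1 / (n : ℝ)) • ∑ i, v i‖ ^ 2) μ)
    (hSunbiased : ∀ v : Fin n → EuclideanSpace ℝ (Fin d),
      ∫ ω, S ω v ∂μ = (1 / (n : ℝ)) • ∑ i, v i)
    (hSab : ∀ v : Fin n → EuclideanSpace ℝ (Fin d),
      ∫ ω, ‖S ω v - (1 / (n : ℝ)) • ∑ i, v i‖ ^ 2 ∂μ
        ≤ (A / n) * ∑ i, (1 / ((n : ℝ) * w i)) * ‖v i‖ ^ 2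
          - B * ‖(1 / (n : ℝ)) • ∑ i, v i‖ ^ 2)
    (f : Fin n → EuclideanSpace ℝ (Fin d) → ℝ) (hdiff : ∀ i, Differentiable ℝ (f i))
    (Lpw Lpm : ℝ)
    (hsmooth : ∀ x y, (1 / (n : ℝ)) * ∑ i, (1 / ((n : ℝ) * w i))
        * ‖gradient (f i) x - gradient (f i) y‖ ^ 2 ≤ Lpw ^ 2 * ‖x - y‖ ^ 2)
    (hhess : ∀ x y, (1 / (n : ℝ)) * ∑ i, (1 / ((n : ℝ) * w i))
          * ‖gradient (f i) x - gradient (f i) y‖ ^ 2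
        - ‖gradient (fun z => (1 / (n : ℝ)) * ∑ i, f i z) x
            - gradient (fun z => (1 / (n : ℝ)) * ∑ i, f i z) y‖ ^ 2
        ≤ Lpm ^ 2 * ‖x - y‖ ^ 2)
    (p : ℝ) (hp : p ∈ Set.Ioc (0 : ℝ) 1)
    (xt xt1 gt : EuclideanSpace ℝ (Fin d)) :
    (1 - p) * ∫ ω, ‖gt + S ω (fun i => gradient (f i) xt1 - gradient (f i) xt)
          - gradient (fun z => (1 / (n : ℝ)) * ∑ i, f i z) xt1‖ ^ 2 ∂μ
      ≤ (1 - p) * ((A - B) * Lpw ^ 2 + B * Lpm ^ 2) * ‖xt1 - xt‖ ^ 2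
        + (1 - p) * ‖gt - gradient (fun z => (1 / (n : ℝ)) * ∑ i, f i z) xt‖ ^ 2 := by
  set F := fun z => (1 / (n : ℝ)) * ∑ i, f i z
  set v := fun i => gradient (f i) xt1 - gradient (f i) xt
  set m := (1 / (n : ℝ)) • ∑ i, v i
  have hm : m = gradient F xt1 - gradient F xt := by
    simp only [F, gradient_const_mul_sum _ (fun i _ => (hdiff i).differentiableAt), m, v,
      Finset.sum_sub_distrib, smul_sub]
  have hcentered : ∫ ω, S ω v - m ∂μ = 0 := by
    rw [integral_sub (hSint v) (integrable_const m), hSunbiased v, integral_const]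
    simp [m]
  have hsplit : ∀ ω, gt + S ω v - gradient F xt1 = (S ω v - m) + (gt - gradient F xt) := by
    intro ω; rw [hm]; abel
  have hvar : ∫ ω, ‖S ω v - m‖ ^ 2 ∂μ ≤ ((A - B) * Lpw ^ 2 + B * Lpm ^ 2) * ‖xt1 - xt‖ ^ 2 := by
    rw [add_mul, mul_assoc, mul_assoc]
    refine le_sub_mul_add_mul_of_le_mul_sub_mul hB hBA ?_ (hsmooth xt1 xt) (hm ▸ hhess xt1 xt)
    convert hSab v using 2
    ring
  have hdecomp := integral_norm_add_const_sq (Y := fun ω => S ω v - m)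
    ((hSint v).sub (integrable_const m)) (hSint2 v) hcentered (gt - gradient F xt)
  simp_rw [hsplit, hdecomp, mul_assoc, ← mul_add]
  exact mul_le_mul_of_nonneg_left (by linarith) (sub_nonneg.mpr hp.2)

/-- key MARINA variance lemma: if the combinatorial compressor `S` is unbiased
and satisfies the weighted AB-inequality with constants `A, B` and weights `w`, and the local
losses satisfy the weighted smoothness and weighted Hessian-variance conditions with constants
`Lpw` and `Lpm`, then conditionally on `x⁺` the MARINA estimator
(`∇f(x⁺)` with probability `p`, `g + S({∇fᵢ(x⁺) − ∇fᵢ(x)})` with probability `1−p`) satisfies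
`E‖g⁺ − ∇f(x⁺)‖² ≤ (1−p)((A−B)Lpw² + B Lpm²)‖x⁺ − x‖² + (1−p)‖g − ∇f(x)‖²`. -/
theorem marina_variance_lemma (d n : ℕ) (hn : 0 < n)
    {Ω : Type*} [MeasurableSpace Ω] (μ : Measure Ω) [IsProbabilityMeasure μ]
    (S : Ω → (Fin n → EuclideanSpace ℝ (Fin d)) → EuclideanSpace ℝ (Fin d))
    (A B : ℝ) (hA : 0 ≤ A) (hB : 0 ≤ B) (hBA : B ≤ A)
    (w : Fin n → ℝ) (hw : ∀ i, 0 < w i) (hwsum : ∑ i, w i = 1)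
    (hSint : ∀ v : Fin n → EuclideanSpace ℝ (Fin d), Integrable (fun ω => S ω v) μ)
    (hSint2 : ∀ v : Fin n → EuclideanSpace ℝ (Fin d),
      Integrable (fun ω => ‖S ω v - (1 / (n : ℝ)) • ∑ i, v i‖ ^ 2) μ)
    (hSunbiased : ∀ v : Fin n → EuclideanSpace ℝ (Fin d),
      ∫ ω, S ω v ∂μ = (1 / (n : ℝ)) • ∑ i, v i)
    (hSab : ∀ v : Fin n → EuclideanSpace ℝ (Fin d),
      ∫ ω, ‖S ω v - (1 / (n : ℝ)) • ∑ i, v i‖ ^ 2 ∂μ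
        ≤ (A / n) * ∑ i, (1 / ((n : ℝ) * w i)) * ‖v i‖ ^ 2
          - B * ‖(1 / (n : ℝ)) • ∑ i, v i‖ ^ 2)
    (f : Fin n → EuclideanSpace ℝ (Fin d) → ℝ) (hdiff : ∀ i, Differentiable ℝ (f i))
    (Lpw Lpm : ℝ) (hLpw : 0 ≤ Lpw) (hLpm : 0 ≤ Lpm)
    (hsmooth : ∀ x y, (1 / (n : ℝ)) * ∑ i, (1 / ((n : ℝ) * w i))
        * ‖gradient (f i) x - gradient (f i) y‖ ^ 2 ≤ Lpw ^ 2 * ‖x - y‖ ^ 2)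
    (hhess : ∀ x y, (1 / (n : ℝ)) * ∑ i, (1 / ((n : ℝ) * w i))
          * ‖gradient (f i) x - gradient (f i) y‖ ^ 2
        - ‖gradient (fun z => (1 / (n : ℝ)) * ∑ i, f i z) x
            - gradient (fun z => (1 / (n : ℝ)) * ∑ i, f i z) y‖ ^ 2
        ≤ Lpm ^ 2 * ‖x - y‖ ^ 2)
    (p : ℝ) (hp : p ∈ Set.Ioc (0 : ℝ) 1)
    (xt xt1 gt : EuclideanSpace ℝ (Fin d)) :
    (1 - p) * ∫ ω, ‖gt + S ω (fun i => gradient (f i) xt1 - gradient (f i) xt)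
          - gradient (fun z => (1 / (n : ℝ)) * ∑ i, f i z) xt1‖ ^ 2 ∂μ
      ≤ (1 - p) * ((A - B) * Lpw ^ 2 + B * Lpm ^ 2) * ‖xt1 - xt‖ ^ 2
        + (1 - p) * ‖gt - gradient (fun z => (1 / (n : ℝ)) * ∑ i, f i z) xt‖ ^ 2 :=
  marina_variance_lemma_general d n μ S A B hB hBA w hSint hSint2 hSunbiased hSab f hdiff Lpw Lpm
    hsmooth hhess p hp xt xt1 gt
end

section
/- Suppose f is lower bounded by f^inf, ∇f is L₋-Lipschitz, and the MARINA estimator satisfies E[‖g^{t+1} − ∇f(x^{t+1})‖² | past] ≤ (1−p)Ĺ²‖x^{t+1} − x^t‖² + (1−p)‖g^t − ∇f(x^t)‖² with Ĺ² = (A−B)L₊,w² + B L±,w². If 0 < γ ≤ (L₋ + √((1−p)/p · Ĺ²))⁻¹, then the iterates x^{t+1} = x^t − γg^t with g⁰ = ∇f(x⁰) satisfy (1/T)∑_{t=0}^{T−1} E‖∇f(x^t)‖² ≤ 2(f(x⁰) − f^inf)/(γT). -/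
/-!
The Lyapunov function `Φᵗ = E f(xᵗ) − f^inf + γ/(2p) E‖gᵗ − ∇f(xᵗ)‖²` drops by at least
`γ/2 E‖∇f(xᵗ)‖²` per step: the descent lemma for `L₋`-smooth `f` pays `γ/2 E‖gᵗ − ∇f(xᵗ)‖²`
for the estimator error, the recursion gives back `γ/2` of it at the price of
`γ(1−p)Ĺ²/(2p) E‖xᵗ⁺¹ − xᵗ‖²`, and the stepsize bound makes this price at most the
`(1/(2γ) − L₋/2) E‖xᵗ⁺¹ − xᵗ‖²` gained by the descent lemma. Telescoping with `Φᵀ ≥ 0` and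
`Φ⁰ = f(x⁰) − f^inf` gives the bound.
-/

open MeasureTheory

section Smooth

variable {E : Type*} [NormedAddCommGroup E] [InnerProductSpace ℝ E] [CompleteSpace E]

theorem HasGradientAt.hasDerivAt_comp_add_smul {f : E → ℝ} {f' x v : E} {t : ℝ}
    (h : HasGradientAt f f' (x + t • v)) :
    HasDerivAt (fun s : ℝ => f (x + s • v)) (inner ℝ f' v) t := by
  have hline : HasDerivAt (fun s : ℝ => x + s • v) v t := by
    simpa using ((hasDerivAt_id t).smul_const v).const_add x
  exact h.hasFDerivAt.comp_hasDerivAt t hline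

theorem le_add_inner_gradient_add_half_mul_sq {f : E → ℝ} (hf : Differentiable ℝ f) {L : ℝ}
    (hL : ∀ x y, ‖gradient f x - gradient f y‖ ≤ L * ‖x - y‖) (x y : E) :
    f y ≤ f x + inner ℝ (gradient f x) (y - x) + L / 2 * ‖y - x‖ ^ 2 := by
  set v := y - x
  let φ : ℝ → ℝ := fun t => f (x + t • v) - t * inner ℝ (gradient f x) v - L / 2 * t ^ 2 * ‖v‖ ^ 2
  let φ' : ℝ → ℝ := fun t =>
    inner ℝ (gradient f (x + t • v)) v - inner ℝ (gradient f x) v - L * t * ‖v‖ ^ 2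
  have hφ : ∀ t, HasDerivAt φ (φ' t) t := fun t => by
    have hfline : HasDerivAt (fun s : ℝ => f (x + s • v)) (inner ℝ (gradient f (x + t • v)) v) t :=
      (hf _).hasGradientAt.hasDerivAt_comp_add_smul
    refine ((hfline.sub ((hasDerivAt_id t).mul_const (inner ℝ (gradient f x) v))).sub
      (((hasDerivAt_pow 2 t).const_mul (L / 2)).mul_const (‖v‖ ^ 2))).congr_deriv ?_
    simp only [φ']; push_cast; ring
  have hφ'_nonpos : ∀ t ∈ interior (Set.Ici (0 : ℝ)), φ' t ≤ 0 := by
    intro t ht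
    rw [interior_Ici] at ht
    have hnorm : ‖x + t • v - x‖ = t * ‖v‖ := by
      rw [add_sub_cancel_left, norm_smul, Real.norm_of_nonneg (le_of_lt ht)]
    have hlip := hL (x + t • v) x
    rw [hnorm] at hlip
    calc φ' t = inner ℝ (gradient f (x + t • v) - gradient f x) v - L * t * ‖v‖ ^ 2 := by
          rw [inner_sub_left]
      _ ≤ ‖gradient f (x + t • v) - gradient f x‖ * ‖v‖ - L * t * ‖v‖ ^ 2 := by
          gcongr; exact real_inner_le_norm _ _
      _ ≤ L * (t * ‖v‖) * ‖v‖ - L * t * ‖v‖ ^ 2 := by gcongr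
      _ = 0 := by ring
  have hanti : AntitoneOn φ (Set.Ici 0) :=
    antitoneOn_of_hasDerivWithinAt_nonpos (convex_Ici 0)
      (fun t _ => (hφ t).continuousAt.continuousWithinAt)
      (fun t _ => (hφ t).hasDerivWithinAt) hφ'_nonpos
  have h10 : φ 1 ≤ φ 0 := hanti (Set.mem_Ici.2 le_rfl) (Set.mem_Ici.2 zero_le_one) zero_le_one
  simp only [φ, one_smul, zero_smul, add_zero, one_mul, zero_mul, one_pow, mul_one, sub_zero,
    ne_eq, OfNat.ofNat_ne_zero, not_false_eq_true, zero_pow, mul_zero, v, add_sub_cancel] at h10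
  linarith

theorem descent_lemma {f : E → ℝ} (hf : Differentiable ℝ f) {L : ℝ}
    (hL : ∀ x y, ‖gradient f x - gradient f y‖ ≤ L * ‖x - y‖) {γ : ℝ} (hγ : γ ≠ 0)
    {x x' g : E} (hx' : x' = x - γ • g) :
    f x' ≤ f x - γ / 2 * ‖gradient f x‖ ^ 2 - (1 / (2 * γ) - L / 2) * ‖x' - x‖ ^ 2
      + γ / 2 * ‖g - gradient f x‖ ^ 2 := by
  have hsmooth := le_add_inner_gradient_add_half_mul_sq hf hL x x'
  have hstep : x' - x = -(γ • g) := by rw [hx']; abel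
  have hinner : inner ℝ (gradient f x) (x' - x) = -(γ * inner ℝ (gradient f x) g) := by
    rw [hstep, inner_neg_right, real_inner_smul_right]
  have hnorm : ‖x' - x‖ ^ 2 = γ ^ 2 * ‖g‖ ^ 2 := by
    rw [hstep, norm_neg, norm_smul, mul_pow, Real.norm_eq_abs, sq_abs]
  rw [hinner, hnorm] at hsmooth
  have hpolar : ‖g - gradient f x‖ ^ 2
      = ‖g‖ ^ 2 - 2 * inner ℝ (gradient f x) g + ‖gradient f x‖ ^ 2 := by
    rw [norm_sub_sq_real, real_inner_comm]
  have hcancel : 1 / (2 * γ) * (γ ^ 2 * ‖g‖ ^ 2) = γ / 2 * ‖g‖ ^ 2 := by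
    field_simp
  rw [hnorm, hpolar]
  linarith

theorem integral_descent_lemma {Ω : Type*} [MeasurableSpace Ω] {μ : Measure Ω} {f : E → ℝ}
    (hf : Differentiable ℝ f) {L : ℝ} (hL : ∀ x y, ‖gradient f x - gradient f y‖ ≤ L * ‖x - y‖)
    {γ : ℝ} (hγ : γ ≠ 0) {X X' G : Ω → E} (hX' : ∀ ω, X' ω = X ω - γ • G ω)
    (hfX : Integrable (fun ω => f (X ω)) μ) (hfX' : Integrable (fun ω => f (X' ω)) μ)
    (hgrad : Integrable (fun ω => ‖gradient f (X ω)‖ ^ 2) μ)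
    (hstep : Integrable (fun ω => ‖X' ω - X ω‖ ^ 2) μ)
    (herr : Integrable (fun ω => ‖G ω - gradient f (X ω)‖ ^ 2) μ) :
    ∫ ω, f (X' ω) ∂μ ≤ ∫ ω, f (X ω) ∂μ - γ / 2 * ∫ ω, ‖gradient f (X ω)‖ ^ 2 ∂μ
      - (1 / (2 * γ) - L / 2) * ∫ ω, ‖X' ω - X ω‖ ^ 2 ∂μ
      + γ / 2 * ∫ ω, ‖G ω - gradient f (X ω)‖ ^ 2 ∂μ := by
  set C := 1 / (2 * γ) - L / 2
  have hfXgrad : Integrable (fun ω => f (X ω) - γ / 2 * ‖gradient f (X ω)‖ ^ 2) μ :=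
    hfX.sub (hgrad.const_mul _)
  have hfXgradstep : Integrable (fun ω => f (X ω) - γ / 2 * ‖gradient f (X ω)‖ ^ 2
      - C * ‖X' ω - X ω‖ ^ 2) μ :=
    hfXgrad.sub (hstep.const_mul _)
  calc ∫ ω, f (X' ω) ∂μ
      ≤ ∫ ω, (f (X ω) - γ / 2 * ‖gradient f (X ω)‖ ^ 2 - C * ‖X' ω - X ω‖ ^ 2
          + γ / 2 * ‖G ω - gradient f (X ω)‖ ^ 2) ∂μ :=
        integral_mono hfX' (hfXgradstep.add (herr.const_mul _))
          fun ω => descent_lemma hf hL hγ (hX' ω)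
    _ = _ := by
        rw [integral_add hfXgradstep (herr.const_mul _), integral_sub hfXgrad (hstep.const_mul _),
          integral_sub hfX (hgrad.const_mul _), integral_const_mul, integral_const_mul,
          integral_const_mul]

end Smooth

theorem mul_sq_add_mul_le_one_of_le_inv_add_sqrt {L a γ : ℝ} (hL : 0 ≤ L) (hγ0 : 0 < γ)
    (hγ : γ ≤ (L + √a)⁻¹) : a * γ ^ 2 + L * γ ≤ 1 := by
  have hpos : 0 < L + √a := by
    by_contra! h
    exact absurd (hγ.trans (inv_nonpos.2 h)) hγ0.not_ge
  have hsum : L * γ + √a * γ ≤ 1 := by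
    rw [le_inv_comm₀ hγ0 hpos, ← one_div, le_div_iff₀ hγ0] at hγ; linarith
  have ha : a ≤ √a ^ 2 := by rw [Real.sq_sqrt']; exact le_max_left a 0
  have hsγ : √a * γ ≤ 1 := by nlinarith
  have hsγ0 : 0 ≤ √a * γ := by positivity
  nlinarith [mul_le_mul_of_nonneg_right ha (sq_nonneg γ), mul_le_mul_of_nonneg_left hsγ hsγ0]

theorem div_mul_le_of_le_inv_add_sqrt {L K p γ : ℝ} (hL : 0 ≤ L) (hp : 0 < p) (hγ0 : 0 < γ)
    (hγ : γ ≤ (L + √((1 - p) / p * K))⁻¹) :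
    γ / (2 * p) * (1 - p) * K ≤ 1 / (2 * γ) - L / 2 := by
  have h := mul_sq_add_mul_le_one_of_le_inv_add_sqrt hL hγ0 hγ
  rw [← sub_nonneg]
  have heq : 1 / (2 * γ) - L / 2 - γ / (2 * p) * (1 - p) * K
      = (1 - ((1 - p) / p * K * γ ^ 2 + L * γ)) / (2 * γ) := by
    field_simp; ring
  rw [heq]
  exact div_nonneg (by linarith) (by positivity)

theorem sum_range_le_of_lyapunov {F N G D : ℕ → ℝ} {γ p K C : ℝ} (hγ : 0 ≤ γ) (hp : 0 < p)
    (hF : ∀ t, F (t + 1) ≤ F t - γ / 2 * N t - C * D t + γ / 2 * G t)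
    (hG : ∀ t, G (t + 1) ≤ (1 - p) * K * D t + (1 - p) * G t)
    (hD : ∀ t, 0 ≤ D t) (hC : γ / (2 * p) * (1 - p) * K ≤ C) (T : ℕ) :
    γ / 2 * ∑ t ∈ Finset.range T, N t
      ≤ F 0 + γ / (2 * p) * G 0 - (F T + γ / (2 * p) * G T) := by
  set Φ : ℕ → ℝ := fun t => F t + γ / (2 * p) * G t
  have hΦ : ∀ t, γ / 2 * N t ≤ Φ t - Φ (t + 1) := by
    intro t
    have hGsplit : γ / (2 * p) * ((1 - p) * G t) = γ / (2 * p) * G t - γ / 2 * G t := by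
      field_simp
    have hGt := mul_le_mul_of_nonneg_left (hG t) (by positivity : 0 ≤ γ / (2 * p))
    have hDC := mul_le_mul_of_nonneg_right hC (hD t)
    have hFt := hF t
    simp only [Φ]
    linarith
  rw [Finset.mul_sum]
  exact (Finset.sum_le_sum fun t _ => hΦ t).trans_eq (Finset.sum_range_sub' Φ T)

theorem marina_convergence_general (d : ℕ)
    (f : EuclideanSpace ℝ (Fin d) → ℝ) (hdiff : Differentiable ℝ f)
    (finf : ℝ) (hlb : ∀ x, finf ≤ f x)
    (Lm : ℝ) (hLm : 0 ≤ Lm)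
    (hlip : ∀ x y, ‖gradient f x - gradient f y‖ ≤ Lm * ‖x - y‖)
    (A B Lpw Lpm : ℝ)
    (p : ℝ) (hp : p ∈ Set.Ioc (0 : ℝ) 1)
    (γ : ℝ) (hγ0 : 0 < γ)
    (hγ : γ ≤ (Lm + Real.sqrt ((1 - p) / p * ((A - B) * Lpw ^ 2 + B * Lpm ^ 2)))⁻¹)
    {Ω : Type*} [MeasurableSpace Ω] (μ : Measure Ω) [IsProbabilityMeasure μ]
    (x g : ℕ → Ω → EuclideanSpace ℝ (Fin d)) (x0 : EuclideanSpace ℝ (Fin d))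
    (hx0 : ∀ ω, x 0 ω = x0)
    (hg0 : ∀ ω, g 0 ω = gradient f (x 0 ω))
    (hupd : ∀ t ω, x (t + 1) ω = x t ω - γ • g t ω)
    (hintf : ∀ t, Integrable (fun ω => f (x t ω)) μ)
    (hintg : ∀ t, Integrable (fun ω => ‖g t ω - gradient f (x t ω)‖ ^ 2) μ)
    (hintx : ∀ t, Integrable (fun ω => ‖x (t + 1) ω - x t ω‖ ^ 2) μ)
    (hintgrad : ∀ t, Integrable (fun ω => ‖gradient f (x t ω)‖ ^ 2) μ)
    (hrec : ∀ t, ∫ ω, ‖g (t + 1) ω - gradient f (x (t + 1) ω)‖ ^ 2 ∂μ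
      ≤ (1 - p) * ((A - B) * Lpw ^ 2 + B * Lpm ^ 2)
          * ∫ ω, ‖x (t + 1) ω - x t ω‖ ^ 2 ∂μ
        + (1 - p) * ∫ ω, ‖g t ω - gradient f (x t ω)‖ ^ 2 ∂μ)
    (T : ℕ) :
    (1 / (T : ℝ)) * ∑ t ∈ Finset.range T, ∫ ω, ‖gradient f (x t ω)‖ ^ 2 ∂μ
      ≤ 2 * (f x0 - finf) / (γ * T) := by
  obtain ⟨hp0, -⟩ := hp
  have hlyap := sum_range_le_of_lyapunov (F := fun t => ∫ ω, f (x t ω) ∂μ)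
    (N := fun t => ∫ ω, ‖gradient f (x t ω)‖ ^ 2 ∂μ)
    (G := fun t => ∫ ω, ‖g t ω - gradient f (x t ω)‖ ^ 2 ∂μ)
    (D := fun t => ∫ ω, ‖x (t + 1) ω - x t ω‖ ^ 2 ∂μ) hγ0.le hp0
    (fun t => integral_descent_lemma hdiff hlip hγ0.ne' (hupd t) (hintf t) (hintf (t + 1))
      (hintgrad t) (hintx t) (hintg t))
    hrec (fun t => integral_nonneg fun ω => by positivity)
    (div_mul_le_of_le_inv_add_sqrt hLm hp0 hγ0 hγ) T
  have hF0 : ∫ ω, f (x 0 ω) ∂μ = f x0 := by simp [hx0]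
  have hG0 : ∫ ω, ‖g 0 ω - gradient f (x 0 ω)‖ ^ 2 ∂μ = 0 := by simp [hg0]
  have hFT : finf ≤ ∫ ω, f (x T ω) ∂μ := by
    simpa using integral_mono (integrable_const finf) (hintf T) fun ω => hlb (x T ω)
  have hGT : 0 ≤ γ / (2 * p) * ∫ ω, ‖g T ω - gradient f (x T ω)‖ ^ 2 ∂μ :=
    mul_nonneg (by positivity) (integral_nonneg fun ω => by positivity)
  have hsum_grad :
      ∑ t ∈ Finset.range T, ∫ ω, ‖gradient f (x t ω)‖ ^ 2 ∂μ ≤ 2 * (f x0 - finf) / γ := by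
    rw [le_div_iff₀ hγ0]
    simp only [hF0, hG0] at hlyap
    linarith
  calc (1 / (T : ℝ)) * ∑ t ∈ Finset.range T, ∫ ω, ‖gradient f (x t ω)‖ ^ 2 ∂μ
      ≤ 1 / (T : ℝ) * (2 * (f x0 - finf) / γ) := by gcongr
    _ = 2 * (f x0 - finf) / (γ * T) := by rw [one_div, inv_mul_eq_div, div_div]

/-- MARINA convergence: if `f` is lower bounded by `finf`, `∇f` is
`L₋`-Lipschitz, the iterates satisfy `x^{t+1} = x^t − γ g^t` with `g⁰ = ∇f(x⁰)` and the
estimator recursion `E‖g^{t+1} − ∇f(x^{t+1})‖² ≤ (1−p)Ĺ² E‖x^{t+1} − x^t‖²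
+ (1−p)E‖g^t − ∇f(x^t)‖²` with `Ĺ² = (A−B)Lpw² + B Lpm²`, and
`0 < γ ≤ (L₋ + √((1−p)/p · Ĺ²))⁻¹`, then
`(1/T)∑_{t<T} E‖∇f(x^t)‖² ≤ 2(f(x⁰) − finf)/(γ T)`. -/
theorem marina_convergence (d : ℕ)
    (f : EuclideanSpace ℝ (Fin d) → ℝ) (hdiff : Differentiable ℝ f)
    (finf : ℝ) (hlb : ∀ x, finf ≤ f x)
    (Lm : ℝ) (hLm : 0 ≤ Lm)
    (hlip : ∀ x y, ‖gradient f x - gradient f y‖ ≤ Lm * ‖x - y‖)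
    (A B Lpw Lpm : ℝ) (hA : 0 ≤ A) (hB : 0 ≤ B) (hBA : B ≤ A)
    (hLpw : 0 ≤ Lpw) (hLpm : 0 ≤ Lpm)
    (p : ℝ) (hp : p ∈ Set.Ioc (0 : ℝ) 1)
    (γ : ℝ) (hγ0 : 0 < γ)
    (hγ : γ ≤ (Lm + Real.sqrt ((1 - p) / p * ((A - B) * Lpw ^ 2 + B * Lpm ^ 2)))⁻¹)
    {Ω : Type*} [MeasurableSpace Ω] (μ : Measure Ω) [IsProbabilityMeasure μ]
    (x g : ℕ → Ω → EuclideanSpace ℝ (Fin d)) (x0 : EuclideanSpace ℝ (Fin d))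
    (hx0 : ∀ ω, x 0 ω = x0)
    (hg0 : ∀ ω, g 0 ω = gradient f (x 0 ω))
    (hupd : ∀ t ω, x (t + 1) ω = x t ω - γ • g t ω)
    (hintf : ∀ t, Integrable (fun ω => f (x t ω)) μ)
    (hintg : ∀ t, Integrable (fun ω => ‖g t ω - gradient f (x t ω)‖ ^ 2) μ)
    (hintx : ∀ t, Integrable (fun ω => ‖x (t + 1) ω - x t ω‖ ^ 2) μ)
    (hintgrad : ∀ t, Integrable (fun ω => ‖gradient f (x t ω)‖ ^ 2) μ)
    (hrec : ∀ t, ∫ ω, ‖g (t + 1) ω - gradient f (x (t + 1) ω)‖ ^ 2 ∂μ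
      ≤ (1 - p) * ((A - B) * Lpw ^ 2 + B * Lpm ^ 2)
          * ∫ ω, ‖x (t + 1) ω - x t ω‖ ^ 2 ∂μ
        + (1 - p) * ∫ ω, ‖g t ω - gradient f (x t ω)‖ ^ 2 ∂μ)
    (T : ℕ) (hT : 0 < T) :
    (1 / (T : ℝ)) * ∑ t ∈ Finset.range T, ∫ ω, ‖gradient f (x t ω)‖ ^ 2 ∂μ
      ≤ 2 * (f x0 - finf) / (γ * T) :=
  marina_convergence_general d f hdiff finf hlb Lm hLm hlip A B Lpw Lpm p hp γ hγ0 hγ μ x g x0 hx0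
    hg0 hupd hintf hintg hintx hintgrad hrec T
end
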